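/- arXiv:1606.05628 — 8 statements merged into one kernel-verified Lean document; each statement's English description precedes it below -/
import Mathlib

section
/- Let G be an ordered graph on N vertices with at least εN² edges, where ε > 0 and N ≥ n/ε. Then G contains the alternating path P_n on n vertices as an ordered subgraph, where the alternating path P_n is the ordering v₁ ≺ v₃ ≺ v₅ ≺ … ≺ v_n ≺ v_{n-1} ≺ … ≺ v₂ (for n odd; analogously for n even) of the path with edges v_i v_{i+1}. -/
/-!
Suppose the ordered graph `G` on `N` vertices contains no alternating path on `n` vertices. Rank
each edge `ab` (`a < b`) by the length of the longest zigzag `A₀ < A₁ < ⋯ < Aₖ < Bₖ < ⋯ < B₀`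
(path `A₀ B₀ A₁ B₁ ⋯ Aₖ Bₖ`) whose innermost rung is `ab`; fewer than `(n - 1) / 2` ranks
occur. If `a' < a < b < b'` and `a'b'`, `ab'`, `ab` are edges, the longest zigzag ending in
`a'b'` extends through `a` and `b`, so `ab` has larger rank than `a'b'`. Hence each rank class is
hook-free, and charging an edge to its right end if it is the lowest edge of its class there and
to its left end otherwise shows that a class has at most `2N` edges. So `G` has at most
`(n - 1) N` edges, fewer than `ε N²` when `N ≥ n / ε`.
-/

/-- Position of the `j`-th vertex (0-indexed) of the path in the alternating order. -/
def altPos (n j : ℕ) : ℕ := if j % 2 = 0 then j / 2 else n - (j + 1) / 2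

/-- `pathRel n i j` : positions `i`, `j` host consecutive path vertices. -/
def pathRel (n i j : ℕ) : Prop := ∃ m, m + 1 < n ∧ i = altPos n m ∧ j = altPos n (m + 1)

/-- The alternating path on `n` vertices, as an ordered graph on `Fin n`. -/
def altPath (n : ℕ) : SimpleGraph (Fin n) :=
  SimpleGraph.fromRel (fun a b => pathRel n a.val b.val)

/-- `H` is an ordered subgraph of `G`: a strictly monotone edge-preserving embedding. -/
def IsOrderedSubgraph {m N : ℕ} (H : SimpleGraph (Fin m)) (G : SimpleGraph (Fin N)) : Prop :=
  ∃ f : Fin m → Fin N, StrictMono f ∧ ∀ u v, H.Adj u v → G.Adj (f u) (f v)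

open Finset

section Hook

variable {α β : Type*} [LinearOrder α] [LinearOrder β]

def HookFree (s : Set (α × β)) : Prop :=
  ∀ ⦃a a' : α⦄ ⦃b b' : β⦄, a' < a → b < b' → (a', b') ∈ s → (a, b') ∈ s → (a, b) ∈ s → False

theorem HookFree.card_le [Fintype α] [Fintype β] {s : Finset (α × β)}
    (hs : HookFree (s : Set (α × β))) : #s ≤ Fintype.card α + Fintype.card β := by
  classical
  let φ : α × β → α ⊕ β := fun p =>
    if ∃ a' < p.1, (a', p.2) ∈ s then .inl p.1 else .inr p.2
  have hφ : Set.InjOn φ s := by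
    rintro ⟨a, b⟩ hab ⟨a', b'⟩ hab' he
    simp only [mem_coe] at hab hab'
    by_cases h : ∃ x < a, (x, b) ∈ s <;> by_cases h' : ∃ x < a', (x, b') ∈ s <;>
      simp only [φ, h, h', if_true, if_false, Sum.inl.injEq, Sum.inr.injEq, reduceCtorEq] at he
    · subst he
      obtain hlt | rfl | hlt := lt_trichotomy b b'
      · obtain ⟨x, hx, hxs⟩ := h'
        exact (hs hx hlt hxs hab' hab).elim
      · rfl
      · obtain ⟨x, hx, hxs⟩ := h
        exact (hs hx hlt hxs hab hab').elim
    · subst he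
      obtain hlt | rfl | hlt := lt_trichotomy a a'
      · exact (h' ⟨a, hlt, hab⟩).elim
      · rfl
      · exact (h ⟨a', hlt, hab'⟩).elim
  calc #s ≤ #(univ : Finset (α ⊕ β)) :=
        card_le_card_of_injOn φ (fun _ _ => mem_coe.2 (mem_univ _)) hφ
    _ = Fintype.card α + Fintype.card β := by simp

theorem card_le_of_hookFree_fibers [Fintype α] [Fintype β] {s : Finset (α × β)}
    (c : α × β → ℕ) {m : ℕ} (hc : ∀ p ∈ s, c p < m)
    (hs : ∀ i, HookFree (({p ∈ s | c p = i} : Finset (α × β)) : Set (α × β))) :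
    #s ≤ m * (Fintype.card α + Fintype.card β) :=
  calc #s = ∑ i ∈ range m, #{p ∈ s | c p = i} :=
        card_eq_sum_card_fiberwise fun p hp => mem_range.2 (hc p hp)
    _ ≤ ∑ _i ∈ range m, (Fintype.card α + Fintype.card β) := sum_le_sum fun i _ => (hs i).card_le
    _ = m * (Fintype.card α + Fintype.card β) := by simp

end Hook

section Zigzag

variable {V : Type*} [Preorder V] {G : SimpleGraph V} {k : ℕ} {A B : ℕ → V}

/-- `A 0 < ⋯ < A k < B k < ⋯ < B 0` carrying the path `A 0, B 0, A 1, B 1, …, A k, B k`: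
an ordered copy of the alternating path on `2 * k + 2` vertices. -/
structure IsZigzag (G : SimpleGraph V) (k : ℕ) (A B : ℕ → V) : Prop where
  left_lt : ∀ ⦃i j⦄, i < j → j ≤ k → A i < A j
  right_lt : ∀ ⦃i j⦄, i < j → j ≤ k → B j < B i
  last_lt : A k < B k
  adj_rung : ∀ i ≤ k, G.Adj (A i) (B i)
  adj_step : ∀ i < k, G.Adj (B i) (A (i + 1))

namespace IsZigzag

theorem left_le_last (h : IsZigzag G k A B) {i : ℕ} (hi : i ≤ k) : A i ≤ A k := by
  obtain hi | rfl := hi.lt_or_eq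
  exacts [(h.left_lt hi le_rfl).le, le_rfl]

theorem last_le_right (h : IsZigzag G k A B) {j : ℕ} (hj : j ≤ k) : B k ≤ B j := by
  obtain hj | rfl := hj.lt_or_eq
  exacts [(h.right_lt hj le_rfl).le, le_rfl]

theorem left_lt_right (h : IsZigzag G k A B) {i j : ℕ} (hi : i ≤ k) (hj : j ≤ k) : A i < B j :=
  (h.left_le_last hi).trans_lt (h.last_lt.trans_le (h.last_le_right hj))

theorem snoc (h : IsZigzag G k A B) {a b : V} (ha : A k < a) (hab : a < b) (hb : b < B k)
    (hBa : G.Adj (B k) a) (hab' : G.Adj a b) :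
    IsZigzag G (k + 1) (fun i => if i ≤ k then A i else a) (fun i => if i ≤ k then B i else b) where
  left_lt i j hij hj := by
    by_cases hjk : j ≤ k
    · simp only [if_pos (hij.le.trans hjk), if_pos hjk, h.left_lt hij hjk]
    · simp only [if_pos (show i ≤ k by omega), if_neg hjk]
      exact (h.left_le_last (by omega)).trans_lt ha
  right_lt i j hij hj := by
    by_cases hjk : j ≤ k
    · simp only [if_pos (hij.le.trans hjk), if_pos hjk, h.right_lt hij hjk]
    · simp only [if_pos (show i ≤ k by omega), if_neg hjk]
      exact hb.trans_le (h.last_le_right (by omega))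
  last_lt := by simpa using hab
  adj_rung i hi := by
    by_cases hik : i ≤ k
    · simpa only [if_pos hik] using h.adj_rung i hik
    · simpa only [if_neg hik] using hab'
  adj_step i hi := by
    by_cases hik : i + 1 ≤ k
    · simpa only [if_pos hik, if_pos (show i ≤ k by omega)] using h.adj_step i hik
    · obtain rfl : i = k := by omega
      simpa using hBa

end IsZigzag

variable (G) in
def HasZigzag (k : ℕ) (a b : V) : Prop := ∃ A B, IsZigzag G k A B ∧ A k = a ∧ B k = b

theorem hasZigzag_zero {a b : V} (hab : a < b) (h : G.Adj a b) : HasZigzag G 0 a b :=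
  ⟨fun _ => a, fun _ => b, ⟨by omega, by omega, hab, fun _ _ => h, by omega⟩, rfl, rfl⟩

theorem HasZigzag.snoc {a b a' b' : V} (h : HasZigzag G k a b) (ha : a < a') (hab : a' < b')
    (hb : b' < b) (hba : G.Adj b a') (hab' : G.Adj a' b') : HasZigzag G (k + 1) a' b' := by
  obtain ⟨A, B, hz, rfl, rfl⟩ := h
  exact ⟨_, _, hz.snoc ha hab hb hba hab', by simp, by simp⟩

end Zigzag

section Embedding

variable {V : Type*}

def zigzagWalk (A B : ℕ → V) (j : ℕ) : V := if j % 2 = 0 then A (j / 2) else B (j / 2)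

def zigzagPlacement (n : ℕ) (A B : ℕ → V) (i : ℕ) : V :=
  if i < (n + 1) / 2 then A i else B (n - 1 - i)

theorem zigzagPlacement_altPos (A B : ℕ → V) {n j : ℕ} (hj : j < n) :
    zigzagPlacement n A B (altPos n j) = zigzagWalk A B j := by
  unfold zigzagPlacement zigzagWalk altPos
  split_ifs <;> first | omega | congr 1 <;> omega

variable [Preorder V] {G : SimpleGraph V} {k : ℕ} {A B : ℕ → V}

theorem IsZigzag.adj_zigzagWalk (h : IsZigzag G k A B) {j : ℕ} (hj : j < 2 * k + 1) :
    G.Adj (zigzagWalk A B j) (zigzagWalk A B (j + 1)) := by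
  unfold zigzagWalk
  rcases Nat.even_or_odd' j with ⟨i, rfl | rfl⟩
  · have e1 : (2 * i + 1) / 2 = i := by omega
    simpa [Nat.mul_mod_right, e1] using h.adj_rung i (by omega)
  · have e1 : (2 * i + 1) / 2 = i := by omega
    have e2 : (2 * i + 1 + 1) / 2 = i + 1 := by omega
    have e3 : (2 * i + 1 + 1) % 2 = 0 := by omega
    simpa [e1, e2, e3] using h.adj_step i (by omega)

theorem IsZigzag.zigzagPlacement_lt (h : IsZigzag G k A B) {n i j : ℕ} (hn : n ≤ 2 * k + 2)
    (hij : i < j) (hj : j < n) : zigzagPlacement n A B i < zigzagPlacement n A B j := by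
  unfold zigzagPlacement
  split_ifs
  · exact h.left_lt hij (by omega)
  · exact h.left_lt_right (by omega) (by omega)
  · omega
  · exact h.right_lt (by omega) (by omega)

theorem IsZigzag.isOrderedSubgraph_altPath {N n : ℕ} {G : SimpleGraph (Fin N)} {A B : ℕ → Fin N}
    (h : IsZigzag G k A B) (hn : n ≤ 2 * k + 2) : IsOrderedSubgraph (altPath n) G := by
  refine ⟨fun i => zigzagPlacement n A B i, fun i j hij => h.zigzagPlacement_lt hn hij j.isLt, ?_⟩
  have hpath : ∀ j, j + 1 < n → G.Adj (zigzagPlacement n A B (altPos n j))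
      (zigzagPlacement n A B (altPos n (j + 1))) := fun j hj => by
    rw [zigzagPlacement_altPos A B (by omega), zigzagPlacement_altPos A B hj]
    exact h.adj_zigzagWalk (by omega)
  rintro u v ⟨-, ⟨j, hj, hu, hv⟩ | ⟨j, hj, hv, hu⟩⟩
  · show G.Adj (zigzagPlacement n A B u) (zigzagPlacement n A B v)
    rw [hu, hv]; exact hpath j hj
  · show G.Adj (zigzagPlacement n A B u) (zigzagPlacement n A B v)
    rw [hu, hv]; exact (hpath j hj).symm

end Embedding

section Rank

variable {N : ℕ} {G : SimpleGraph (Fin N)} {n k : ℕ} {a b : Fin N}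

open Classical

variable (G n) in
noncomputable def zigzagRank (a b : Fin N) : ℕ :=
  Nat.findGreatest (fun k => HasZigzag G k a b) ((n - 1) / 2)

theorem HasZigzag.lt_of_not_isOrderedSubgraph (hG : ¬ IsOrderedSubgraph (altPath n) G)
    (h : HasZigzag G k a b) : k < (n - 1) / 2 := by
  obtain ⟨A, B, hz, -⟩ := h
  by_contra hk
  exact hG (hz.isOrderedSubgraph_altPath (by omega))

theorem HasZigzag.le_zigzagRank (hG : ¬ IsOrderedSubgraph (altPath n) G)
    (h : HasZigzag G k a b) : k ≤ zigzagRank G n a b :=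
  Nat.le_findGreatest (h.lt_of_not_isOrderedSubgraph hG).le h

variable (n) in
theorem hasZigzag_zigzagRank (hab : a < b) (h : G.Adj a b) :
    HasZigzag G (zigzagRank G n a b) a b :=
  Nat.findGreatest_spec (P := fun k => HasZigzag G k a b) (Nat.zero_le _) (hasZigzag_zero hab h)

theorem zigzagRank_lt_of_hook (hG : ¬ IsOrderedSubgraph (altPath n) G) {a' b' : Fin N}
    (ha'b' : a' < b') (hadj' : G.Adj a' b') (ha : a' < a) (hab : a < b) (hb : b < b')
    (hab' : G.Adj a b') (hadj : G.Adj a b) : zigzagRank G n a' b' < zigzagRank G n a b :=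
  ((hasZigzag_zigzagRank n ha'b' hadj').snoc ha hab hb hab'.symm hadj).le_zigzagRank hG

end Rank

theorem SimpleGraph.card_edgeFinset_le_card_lt_adj {V : Type*} [LinearOrder V] [Fintype V]
    (G : SimpleGraph V) [DecidableRel G.Adj] :
    #G.edgeFinset ≤ #{p : V × V | p.1 < p.2 ∧ G.Adj p.1 p.2} := by
  refine card_le_card_of_surjOn (fun p => s(p.1, p.2)) ?_
  intro e he
  induction e using Sym2.ind with
  | _ u v =>
    rw [mem_coe, SimpleGraph.mem_edgeFinset, SimpleGraph.mem_edgeSet] at he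
    obtain h | rfl | h := lt_trichotomy u v
    · exact ⟨(u, v), by simpa using ⟨h, he⟩, rfl⟩
    · exact (he.ne rfl).elim
    · exact ⟨(v, u), by simpa using ⟨h, he.symm⟩, Sym2.eq_swap⟩

theorem card_edgeFinset_le_of_not_isOrderedSubgraph {N n : ℕ} {G : SimpleGraph (Fin N)}
    [DecidableRel G.Adj] (hG : ¬ IsOrderedSubgraph (altPath n) G) :
    #G.edgeFinset ≤ (n - 1) * N := by
  have hcount := card_le_of_hookFree_fibers (s := {p : Fin N × Fin N | p.1 < p.2 ∧ G.Adj p.1 p.2})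
    (fun p => zigzagRank G n p.1 p.2)
    (fun p hp => (hasZigzag_zigzagRank n (mem_filter.1 hp).2.1
      (mem_filter.1 hp).2.2).lt_of_not_isOrderedSubgraph hG) fun i a a' b b' ha hb h₁ h₂ h₃ => by
      simp only [coe_filter, mem_filter, mem_univ, true_and, Set.mem_ofPred_eq] at h₁ h₂ h₃
      obtain ⟨⟨hab₁, hadj₁⟩, hr₁⟩ := h₁
      obtain ⟨⟨-, hadj₂⟩, -⟩ := h₂
      obtain ⟨⟨hab₃, hadj₃⟩, hr₃⟩ := h₃
      have := zigzagRank_lt_of_hook hG hab₁ hadj₁ ha hab₃ hb hadj₂ hadj₃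
      omega
  calc #G.edgeFinset ≤ _ := G.card_edgeFinset_le_card_lt_adj
    _ ≤ (n - 1) / 2 * (N + N) := by simpa using hcount
    _ ≤ (n - 1) * N := by
      rw [← two_mul, ← mul_assoc]
      exact Nat.mul_le_mul_right _ (by omega)

theorem stmt0_general (ε : ℝ) (hε : 0 < ε) (n N : ℕ)
    (hN : (n : ℝ) / ε ≤ N) (G : SimpleGraph (Fin N)) [DecidableRel G.Adj]
    (hE : ε * N ^ 2 ≤ G.edgeFinset.card) :
    IsOrderedSubgraph (altPath n) G := by
  obtain rfl | hn := n.eq_zero_or_pos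
  · exact ⟨Fin.elim0, fun i => i.elim0, fun i => i.elim0⟩
  by_contra hG
  have hnN : (n : ℝ) ≤ ε * N := by rwa [div_le_iff₀ hε, mul_comm] at hN
  have hNpos : 0 < N := by
    have : (0 : ℝ) < ε * N := (Nat.cast_pos.2 hn).trans_le hnN
    exact_mod_cast pos_of_mul_pos_right this hε.le
  have hlower : n * N ≤ #G.edgeFinset := by
    have : (n * N : ℝ) ≤ ε * N ^ 2 := by nlinarith [(N.cast_nonneg : (0 : ℝ) ≤ N)]
    exact_mod_cast this.trans hE
  have hupper := card_edgeFinset_le_of_not_isOrderedSubgraph hG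
  have := Nat.le_of_mul_le_mul_right (hlower.trans hupper) hNpos
  omega

theorem stmt0 (ε : ℝ) (hε : 0 < ε) (n N : ℕ) (hn : 0 < n)
    (hN : (n : ℝ) / ε ≤ N) (G : SimpleGraph (Fin N)) [DecidableRel G.Adj]
    (hE : ε * N ^ 2 ≤ G.edgeFinset.card) :
    IsOrderedSubgraph (altPath n) G :=
  stmt0_general ε hε n N hN G hE
end

section
/- Let ε > 0 and let n be a positive integer. Every ordered graph on N ≥ 2n/ε vertices with at least εN² edges contains the ordered matching M_{2n} as an ordered subgraph, where M_{2n} has vertices 1 < 2 < … < 2n and edges {i, 2n+1−i} for i = 1,…,n (the 'nested' matching). -/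
/-- The nested ordered matching on `2*n` vertices: edges `{i, 2n+1-i}` (1-indexed),
i.e. `a + b = 2n - 1` in 0-indexed form. -/
def nestedMatching (n : ℕ) : SimpleGraph (Fin (2 * n)) :=
  SimpleGraph.fromRel (fun a b => a.val + b.val = 2 * n - 1)

/-!
Orient every edge from its smaller to its larger endpoint and sort the edges by the sum of their
endpoints. Edges with a common endpoint sum `s` are nested: if `a < a'` then `s - a' < s - a`. Since
`N ≥ 2n/ε`, there are at least `εN² ≥ 2nN` edges, so by pigeonhole over the fewer than `2N`
possible sums some `n` edges share their endpoint sum, and they form a copy of `M_{2n}`.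
-/

open Finset

theorem Sym2.mk_inf_sup {α : Type*} [LinearOrder α] (e : Sym2 α) : s(e.inf, e.sup) = e :=
  Sym2.sortEquiv.symm_apply_apply e

theorem nestedMatching_adj_iff {n : ℕ} {u v : Fin (2 * n)} :
    (nestedMatching n).Adj u v ↔ u.val + v.val = 2 * n - 1 := by
  have := u.isLt
  rw [nestedMatching, SimpleGraph.fromRel_adj]
  constructor
  · rintro ⟨-, h | h⟩ <;> omega
  · rintro h
    refine ⟨?_, Or.inl h⟩
    rintro rfl
    omega

section

variable {n N : ℕ} {G : SimpleGraph (Fin N)}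

theorem isOrderedSubgraph_nestedMatching_of_nested (a b : Fin n → Fin N) (s : ℕ)
    (ha : StrictMono a) (hab : ∀ i, a i < b i) (hsum : ∀ i, (a i).val + (b i).val = s)
    (hadj : ∀ i, G.Adj (a i) (b i)) :
    IsOrderedSubgraph (nestedMatching n) G := by
  have hb : StrictAnti b := fun i j hij => by
    have := ha hij; have := hsum i; have := hsum j
    rw [Fin.lt_def] at *
    omega
  have hab' : ∀ i j, a i < b j := fun i j => by
    rcases le_or_gt i j with h | h
    · exact (ha.monotone h).trans_lt (hab j)
    · exact (hab i).trans (hb h)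
  refine ⟨fun k => if h : k.val < n then a ⟨k, h⟩ else b ⟨2 * n - 1 - k, by omega⟩, ?_, ?_⟩
  · intro k l hkl
    rw [Fin.lt_def] at hkl
    have := l.isLt
    by_cases hk : k.val < n <;> by_cases hl : l.val < n <;> simp only [hk, hl, dite_true, dite_false]
    · exact ha (Fin.mk_lt_mk.mpr hkl)
    · exact hab' _ _
    · omega
    · exact hb (Fin.mk_lt_mk.mpr (by omega))
  · intro u v huv
    rw [nestedMatching_adj_iff] at huv
    have := u.isLt; have := v.isLt
    rcases lt_or_ge u.val n with hu | hu
    · have hv : ¬ v.val < n := by omega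
      have hidx : (⟨2 * n - 1 - v, by omega⟩ : Fin n) = ⟨u, hu⟩ := Fin.ext (by simp only; omega)
      simpa only [hu, hv, dite_true, dite_false, hidx] using hadj _
    · have hv : v.val < n := by omega
      have hu' : ¬ u.val < n := by omega
      have hidx : (⟨2 * n - 1 - u, by omega⟩ : Fin n) = ⟨v, hv⟩ := Fin.ext (by simp only; omega)
      simpa only [hu', hv, dite_true, dite_false, hidx] using (hadj _).symm

theorem isOrderedSubgraph_nestedMatching_of_le_card (A : Finset (Fin N)) (s : ℕ) (hA : n ≤ #A)
    (h : ∀ x ∈ A, ∃ y, x < y ∧ x.val + y.val = s ∧ G.Adj x y) :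
    IsOrderedSubgraph (nestedMatching n) G := by
  obtain ⟨A', hA'A, hA'⟩ := Finset.exists_subset_card_eq hA
  choose! b hab hsum hadj using h
  have hmem i := hA'A (A'.orderEmbOfFin_mem hA' i)
  exact isOrderedSubgraph_nestedMatching_of_nested _ (fun i => b (A'.orderEmbOfFin hA' i)) s
    (A'.orderEmbOfFin hA').strictMono (fun i => hab _ (hmem i)) (fun i => hsum _ (hmem i))
    (fun i => hadj _ (hmem i))

variable [DecidableRel G.Adj]

theorem exists_le_card_edges_with_endpoint_sum (hN : 0 < N) (hE : 2 * N * n ≤ #G.edgeFinset) :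
    ∃ s, n ≤ #{e ∈ G.edgeFinset | e.inf.val + e.sup.val = s} := by
  have hmaps : ∀ e ∈ G.edgeFinset, e.inf.val + e.sup.val ∈ range (2 * N) := by
    intro e _
    simp only [mem_range]
    omega
  obtain ⟨s, -, hs⟩ := exists_le_card_fiber_of_mul_le_card_of_maps_to hmaps
    (nonempty_range_iff.mpr (by omega)) (by rwa [card_range])
  exact ⟨s, hs⟩

theorem isOrderedSubgraph_nestedMatching_of_le_card_edgeFinset (hN : 0 < N)
    (hE : 2 * N * n ≤ #G.edgeFinset) : IsOrderedSubgraph (nestedMatching n) G := by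
  obtain ⟨s, hs⟩ := exists_le_card_edges_with_endpoint_sum hN hE
  set F := {e ∈ G.edgeFinset | e.inf.val + e.sup.val = s}
  have hinj : Set.InjOn Sym2.inf (F : Set (Sym2 (Fin N))) := by
    intro e he e' he' hinf
    simp only [F, mem_coe, mem_filter] at he he'
    exact Sym2.inf_eq_inf_and_sup_eq_sup.mp ⟨hinf, Fin.ext (by rw [hinf] at he; omega)⟩
  refine isOrderedSubgraph_nestedMatching_of_le_card (F.image Sym2.inf) s
    (by rwa [card_image_of_injOn hinj]) ?_
  simp only [mem_image, F, mem_filter, SimpleGraph.mem_edgeFinset]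
  rintro _ ⟨e, ⟨he, hsum⟩, rfl⟩
  rw [← e.mk_inf_sup, SimpleGraph.mem_edgeSet] at he
  exact ⟨e.sup, lt_of_le_of_ne e.inf_le_sup he.ne, hsum, he⟩

end

theorem stmt1 (ε : ℝ) (hε : 0 < ε) (n N : ℕ) (hn : 0 < n)
    (hN : 2 * (n : ℝ) / ε ≤ N) (G : SimpleGraph (Fin N)) [DecidableRel G.Adj]
    (hE : ε * N ^ 2 ≤ G.edgeFinset.card) :
    IsOrderedSubgraph (nestedMatching n) G := by
  have hNpos : (0 : ℝ) < N := lt_of_lt_of_le (by positivity) hN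
  have h2n : 2 * (n : ℝ) ≤ ε * N := by
    rw [div_le_iff₀ hε] at hN
    linarith
  refine isOrderedSubgraph_nestedMatching_of_le_card_edgeFinset (by exact_mod_cast hNpos) ?_
  have hcount : ((2 * N * n : ℕ) : ℝ) ≤ #G.edgeFinset := by
    push_cast
    nlinarith
  exact_mod_cast hcount
end

section
/- For every even n ≥ 2, the ordered Ramsey number of the nested ordered matching M_n (with vertex set [n] and edges {i, n+1−i} for i = 1,…,n/2) is at most 2n − 2. That is, every 2-coloring of the edges of the ordered complete graph on 2n−2 vertices contains a monochromatic order-preserving copy of M_n. -/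
/-! The `n - 1` edges `{i, N - 1 - i}`, `i < n - 1`, of the nested matching on `N = 2n - 2`
vertices are pairwise nested, so any `n / 2` of them span an ordered copy of the nested matching
on `n` vertices: their left endpoints in increasing order, followed by the mirror images.
By pigeonhole, `n / 2` of these `2 · (n / 2) - 1` edges have the same colour. -/

/-- The nested ordered matching on `n` vertices (`n` even): edges `{i, n+1-i}` (1-indexed),
i.e. `a + b = n - 1` in 0-indexed form. -/
def nestedM (n : ℕ) : SimpleGraph (Fin n) :=
  SimpleGraph.fromRel (fun a b => a.val + b.val = n - 1)

theorem nestedM_adj_iff {n : ℕ} {u v : Fin n} : (nestedM n).Adj u v ↔ u ≠ v ∧ v = u.rev := by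
  simp only [nestedM, SimpleGraph.fromRel_adj, Fin.ext_iff, Fin.val_rev]
  omega

def nestedExtend {k N : ℕ} (g : Fin k → Fin N) (u : Fin (2 * k)) : Fin N :=
  if h : u.val < k then g ⟨u, h⟩ else (g ⟨u.rev, by rw [Fin.val_rev]; omega⟩).rev

theorem strictMono_nestedExtend {k N : ℕ} {g : Fin k → Fin N} (hg : StrictMono g)
    (hg_half : ∀ i, 2 * (g i : ℕ) + 1 < N) : StrictMono (nestedExtend g) := by
  intro u v huv
  have hleft_lt_mirror : ∀ {i j}, g i < (g j).rev := fun {i j} => by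
    rw [Fin.lt_def, Fin.val_rev]; have := hg_half i; have := hg_half j; omega
  unfold nestedExtend
  split_ifs with hu hv hv
  · exact hg huv
  · exact hleft_lt_mirror
  · exact absurd ((Fin.lt_def.mp huv).trans hv) hu
  · exact Fin.rev_lt_rev.mpr (hg (Fin.rev_lt_rev.mpr huv))

theorem nestedExtend_adj {k N : ℕ} (g : Fin k → Fin N) {u v : Fin (2 * k)}
    (huv : (nestedM (2 * k)).Adj u v) :
    ∃ i, s(nestedExtend g u, nestedExtend g v) = s(g i, (g i).rev) := by
  obtain ⟨-, rfl⟩ := nestedM_adj_iff.mp huv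
  have hrev := u.val_rev
  unfold nestedExtend
  split_ifs with hu hv hv
  · omega
  · exact ⟨⟨u, hu⟩, by simp only [Fin.rev_rev]⟩
  · exact ⟨_, Sym2.eq_swap⟩
  · omega

theorem exists_strictMono_monochromatic {α : Type*} [LinearOrder α] [Fintype α] (d : α → Bool)
    {k : ℕ} (hk : 2 * k ≤ Fintype.card α + 1) :
    ∃ col, ∃ g : Fin k → α, StrictMono g ∧ ∀ i, d (g i) = col := by
  have hfiber : ∃ col, k ≤ (Finset.univ.filter fun a => d a = col).card := by
    have := Finset.card_filter_add_card_filter_not (s := Finset.univ) (fun a => d a = true)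
    by_cases htrue : k ≤ (Finset.univ.filter fun a => d a = true).card
    · exact ⟨true, htrue⟩
    · refine ⟨false, ?_⟩
      simp only [Bool.not_eq_true, Finset.card_univ] at this htrue ⊢
      omega
  obtain ⟨col, hcard⟩ := hfiber
  refine ⟨col, _, (Finset.orderEmbOfCardLe _ hcard).strictMono, fun i => ?_⟩
  exact (Finset.mem_filter.mp (Finset.orderEmbOfCardLe_mem _ hcard i)).2

theorem stmt2_general (n : ℕ) (he : Even n)
    (c : Sym2 (Fin (2 * n - 2)) → Bool) :
    ∃ f : Fin n → Fin (2 * n - 2), StrictMono f ∧ ∃ col : Bool,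
      ∀ u v, (nestedM n).Adj u v → c s(f u, f v) = col := by
  obtain ⟨k, rfl⟩ := he.two_dvd
  have hle : 2 * k - 1 ≤ 2 * (2 * k) - 2 := by omega
  set ι := Fin.castLE hle
  obtain ⟨col, g, hg, hcol⟩ := exists_strictMono_monochromatic
    (fun i => c s(ι i, (ι i).rev)) (k := k) (by simp only [Fintype.card_fin]; omega)
  refine ⟨nestedExtend (ι ∘ g), strictMono_nestedExtend ((Fin.strictMono_castLE hle).comp hg)
    fun i => ?_, col, fun u v huv => ?_⟩
  · have := (g i).isLt; simp only [Function.comp_apply, ι, Fin.val_castLE]; omega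
  · obtain ⟨i, hi⟩ := nestedExtend_adj (ι ∘ g) huv
    rw [hi]
    exact hcol i

theorem stmt2 (n : ℕ) (hn : 2 ≤ n) (he : Even n)
    (c : Sym2 (Fin (2 * n - 2)) → Bool) :
    ∃ f : Fin n → Fin (2 * n - 2), StrictMono f ∧ ∃ col : Bool,
      ∀ u v, (nestedM n).Adj u v → c s(f u, f v) = col :=
  stmt2_general n he c
end

section
/- Let d, n, r, S be positive integers, let X₁,…,X_d ⊆ [n] and Y₁,…,Y_d ⊆ [2n]∖[n] be pairwise disjoint sets with |X₁| ≥ … ≥ |X_d|, |Y₁| ≥ … ≥ |Y_d| and |X_d||Y_d| ≥ S, and let T be a set of r pairs (X_i, Y_j) with 1 ≤ i, j ≤ d. If π is a uniformly random permutation of [n] and M(π) is the ordered matching with edges {i, n+π(i)}, then the probability that e_{M(π)}(X_i, Y_j) = 0 for every (X_i, Y_j) ∈ T is less than exp(−(S/n)·⌊(3d − √(9d² − 8r))/4⌋²). -/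
/-!
Since `|T| = r` and each row of `T` has at most `d` entries, at least `z` rows of `T` have `2z`
entries or more, where `z = ⌊(3d - √(9d² - 8r))/4⌋`. Replacing `π` by `π⁻¹` swaps the roles of
the `X`'s and the `Y`'s, so we may assume `x = |X_d| ≤ |Y_d| = y`. Pick `x` points in each of `z`
such rows: each of these `zx` points must avoid a union of at least `2z` of the `Y`'s, a set of
size at least `2zy`. Revealing `π` point by point, the probability of this is at most
`∏_{s < zx} (n - 2zy)/(n - s) ≤ exp(-z²xy/n)`.
-/

open Finset Function Equiv
open scoped Nat

theorem sub_div_sub_lt_exp {n c k : ℝ} (hk : 0 ≤ k) (hkc : k < c) (hcn : c ≤ n) :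
    (n - c) / (n - k) < Real.exp (-(c - k) / n) := by
  have hn : 0 < n := by linarith
  calc (n - c) / (n - k) ≤ 1 - (c - k) / n := by
        rw [div_le_iff₀ (by linarith), one_sub_div hn.ne', div_mul_eq_mul_div, le_div_iff₀ hn]
        nlinarith
    _ < Real.exp (-(c - k) / n) := by
        rw [sub_eq_neg_add, ← neg_div]
        exact Real.add_one_lt_exp (div_ne_zero (by linarith) hn.ne')

namespace Equiv.Perm

variable {α : Type*} [Fintype α] [DecidableEq α]

theorem card_filter_forall_mem_apply_eq_self (W : Finset α) :
    #{τ : Perm α | ∀ a ∈ W, τ a = a} = (Fintype.card α - #W)! := by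
  have hcompl : Fintype.card {a // a ∉ W} = Fintype.card α - #W := by
    simp [Fintype.card_subtype_compl]
  rw [← Fintype.card_subtype, ← hcompl, ← Fintype.card_perm]
  refine Fintype.card_congr ((Perm.subtypeEquivSubtypePerm (· ∉ W)).trans
    (Equiv.subtypeEquivRight fun τ => ?_)).symm
  simp

theorem card_filter_forall_mem_apply_eq (W : Finset α) (σ : Perm α) :
    #{π : Perm α | ∀ a ∈ W, π a = σ a} = (Fintype.card α - #W)! := by
  rw [← card_filter_forall_mem_apply_eq_self W]
  refine card_equiv (Equiv.mulLeft σ⁻¹) fun π => ?_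
  simp [Equiv.symm_apply_eq]

theorem card_filter_forall_mem_apply_notMem_le (W : Finset α) (C : α → Finset α) {c : ℕ}
    (hC : ∀ a ∈ W, c ≤ #(C a)) :
    #{π : Perm α | ∀ a ∈ W, π a ∉ C a} ≤ (Fintype.card α - c) ^ #W * (Fintype.card α - #W)! := by
  set avoiding := ({π : Perm α | ∀ a ∈ W, π a ∉ C a} : Finset (Perm α))
  let restrict : Perm α → (W → α) := fun π a => π a
  have himage : avoiding.image restrict ⊆ Fintype.piFinset fun a : W => (C a)ᶜ := by
    intro g hg
    obtain ⟨π, hπ, rfl⟩ := mem_image.mp hg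
    simp only [avoiding, mem_filter, mem_univ, true_and] at hπ
    simpa [restrict] using fun a ha => hπ a ha
  have hfiber : ∀ g ∈ avoiding.image restrict, #{π ∈ avoiding | restrict π = g} ≤
      (Fintype.card α - #W)! := by
    intro g hg
    obtain ⟨σ, -, rfl⟩ := mem_image.mp hg
    rw [← card_filter_forall_mem_apply_eq W σ]
    refine card_le_card fun π hπ => ?_
    simp only [mem_filter, mem_univ, true_and] at hπ ⊢
    exact fun a ha => congrFun hπ.2 ⟨a, ha⟩
  have hpi : #(Fintype.piFinset fun a : W => (C a)ᶜ) ≤ (Fintype.card α - c) ^ #W := by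
    rw [Fintype.card_piFinset, ← Fintype.card_coe W, ← card_univ]
    exact prod_le_pow_card _ _ _ fun a _ => by
      rw [card_compl]; exact Nat.sub_le_sub_left (hC a a.2) _
  calc #avoiding ≤ (Fintype.card α - #W)! * #(avoiding.image restrict) :=
        card_le_mul_card_image _ _ hfiber
    _ ≤ (Fintype.card α - #W)! * (Fintype.card α - c) ^ #W :=
        Nat.mul_le_mul_left _ ((card_le_card himage).trans hpi)
    _ = _ := Nat.mul_comm _ _

theorem card_filter_forall_mem_apply_notMem_div_lt (W : Finset α) (C : α → Finset α) {c : ℕ}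
    (hW : W.Nonempty) (hWc : #W ≤ c) (hC : ∀ a ∈ W, c ≤ #(C a)) :
    (#{π : Perm α | ∀ a ∈ W, π a ∉ C a} : ℝ) / (Fintype.card α)! <
      Real.exp (-((c + 1 - #W) * #W) / Fintype.card α) := by
  set n := Fintype.card α
  set m := #W
  have hm : 0 < m := hW.card_pos
  have hmn : m ≤ n := card_le_univ W
  have hdesc : (0 : ℝ) < ((n + 1 - m : ℕ) : ℝ) ^ m :=
    pow_pos (by exact_mod_cast (by omega : 0 < n + 1 - m)) _
  -- `n! = (n - m)! * n.descFactorial m ≥ (n - m)! * (n + 1 - m) ^ m`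
  have hratio : (#{π : Perm α | ∀ a ∈ W, π a ∉ C a} : ℝ) / n ! ≤
      (((n - c : ℕ) : ℝ) / (n + 1 - m : ℕ)) ^ m := by
    rw [div_pow, div_le_div_iff₀ (by positivity) hdesc, ← Nat.factorial_mul_descFactorial hmn]
    exact_mod_cast (Nat.mul_le_mul (card_filter_forall_mem_apply_notMem_le W C hC)
      (Nat.pow_sub_le_descFactorial n m)).trans_eq (by ring)
  refine hratio.trans_lt ?_
  rcases le_or_gt c n with hcn | hnc
  · have hcR : (c : ℝ) ≤ n := by exact_mod_cast hcn
    have hmR : (1 : ℝ) ≤ m := by exact_mod_cast hm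
    have hmc : (m : ℝ) ≤ c := by exact_mod_cast hWc
    rw [Nat.cast_sub hcn, Nat.cast_sub (by omega), Nat.cast_add, Nat.cast_one,
      show (n : ℝ) + 1 - m = n - (m - 1) by ring]
    calc _ < Real.exp (-(c - (m - 1)) / n) ^ m :=
          pow_lt_pow_left₀ (sub_div_sub_lt_exp (by linarith) (by linarith) hcR)
            (div_nonneg (by linarith) (by linarith)) hm.ne'
      _ = _ := by
          rw [← Real.exp_nat_mul]
          congr 1
          ring
  · rw [Nat.sub_eq_zero_of_le hnc.le, Nat.cast_zero, zero_div, zero_pow hm.ne']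
    exact Real.exp_pos _

end Equiv.Perm

theorem smaller_root_nonneg (d r : ℕ) : 0 ≤ (3 * (d : ℝ) - √(9 * d ^ 2 - 8 * r)) / 4 := by
  have hsqrt : √(9 * (d : ℝ) ^ 2 - 8 * r) ≤ √((3 * d) ^ 2) :=
    Real.sqrt_le_sqrt (by nlinarith [r.cast_nonneg (α := ℝ)])
  rw [Real.sqrt_sq (by positivity)] at hsqrt
  linarith

-- `(3d - √(9d² - 8r))/4` is the smaller root of `2t² - 3dt + r`.
theorem two_mul_le_and_le_of_le_root {d r z : ℕ} (hr : r ≤ d ^ 2)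
    (hz : (z : ℝ) ≤ (3 * d - √(9 * d ^ 2 - 8 * r)) / 4) :
    2 * z ≤ d ∧ 3 * d * z ≤ r + 2 * z ^ 2 := by
  have hr' : (r : ℝ) ≤ d ^ 2 := by exact_mod_cast hr
  have hdisc : (0 : ℝ) ≤ 9 * d ^ 2 - 8 * r := by nlinarith
  have hsq := Real.sq_sqrt hdisc
  have hsqrt_nonneg := Real.sqrt_nonneg (9 * (d : ℝ) ^ 2 - 8 * r)
  have hd_le : (d : ℝ) ≤ √(9 * d ^ 2 - 8 * r) :=
    Real.le_sqrt_of_sq_le (by nlinarith)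
  constructor
  · exact_mod_cast (by linarith : (2 * z : ℝ) ≤ d)
  · exact_mod_cast (by nlinarith : (3 * d * z : ℝ) ≤ r + 2 * z ^ 2)

section Degrees

variable {ι : Type*} [Fintype ι] [DecidableEq ι]

theorem card_filter_fst_eq_le (T : Finset (ι × ι)) (i : ι) :
    #{p ∈ T | p.1 = i} ≤ Fintype.card ι :=
  card_le_card_of_injOn Prod.snd (fun _ _ => mem_coe.mpr (mem_univ _)) fun _ hp _ hq hpq =>
    Prod.ext ((mem_filter.mp hp).2.trans (mem_filter.mp hq).2.symm) hpq

theorem le_card_filter_two_mul_le_card_filter_fst (T : Finset (ι × ι)) {z : ℕ}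
    (hzd : 2 * z ≤ Fintype.card ι) (hzT : 3 * Fintype.card ι * z ≤ #T + 2 * z ^ 2) :
    z ≤ #{i | 2 * z ≤ #{p ∈ T | p.1 = i}} := by
  set d := Fintype.card ι
  set I : Finset ι := {i | 2 * z ≤ #{p ∈ T | p.1 = i}}
  set J : Finset ι := {i | ¬2 * z ≤ #{p ∈ T | p.1 = i}}
  have hIJ : #I + #J = d := card_filter_add_card_filter_not _
  have hsum : #T = ∑ i ∈ I, #{p ∈ T | p.1 = i} + ∑ i ∈ J, #{p ∈ T | p.1 = i} := by
    rw [sum_filter_add_sum_filter_not, card_eq_sum_card_fiberwise fun p _ => mem_univ p.1]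
  have hI : ∑ i ∈ I, #{p ∈ T | p.1 = i} ≤ #I * d :=
    sum_le_card_nsmul _ _ _ fun i _ => card_filter_fst_eq_le T i
  have hJ : ∑ i ∈ J, (#{p ∈ T | p.1 = i} + 1) ≤ #J * (2 * z) :=
    sum_le_card_nsmul _ _ _ fun i hi => by have := (mem_filter.mp hi).2; omega
  rw [sum_add_distrib, sum_const, smul_eq_mul, mul_one] at hJ
  by_contra! hIz
  nlinarith

end Degrees

variable {α ι : Type*}

-- The matching `M(π)` has no edge between `A i` and `B j` for `(i, j) ∈ T`.
def AvoidsPairs (A B : ι → Finset α) (T : Finset (ι × ι)) (π : Perm α) : Prop :=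
  ∀ p ∈ T, ∀ a ∈ A p.1, π a ∉ B p.2

instance [DecidableEq α] (A B : ι → Finset α) (T : Finset (ι × ι)) :
    DecidablePred (AvoidsPairs A B T) :=
  fun _ => by unfold AvoidsPairs; infer_instance

theorem avoidsPairs_inv_iff [DecidableEq ι] {A B : ι → Finset α} {T : Finset (ι × ι)}
    {π : Perm α} :
    AvoidsPairs A B T π⁻¹ ↔ AvoidsPairs B A (T.image Prod.swap) π := by
  simp only [AvoidsPairs, forall_mem_image, Prod.fst_swap, Prod.snd_swap]
  refine forall₂_congr fun p _ => ⟨fun h b hb ha => h _ ha (by simpa using hb), fun h a ha hb => ?_⟩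
  exact h _ hb (by simpa using ha)

theorem card_filter_fst_eq_mul_le_card_biUnion [DecidableEq α] [DecidableEq ι] (B : ι → Finset α)
    (hB : Pairwise (Disjoint on B)) {y : ℕ} (hBy : ∀ j, y ≤ #(B j)) (T : Finset (ι × ι)) (i : ι) :
    #{p ∈ T | p.1 = i} * y ≤ #({p ∈ T | p.1 = i}.biUnion fun p => B p.2) := by
  rw [card_biUnion (t := fun p => B p.2) fun p hp q hq hpq => hB fun h => hpq (Prod.ext
    ((mem_filter.mp hp).2.trans (mem_filter.mp hq).2.symm) h), ← smul_eq_mul]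
  exact card_nsmul_le_sum _ _ _ fun p _ => hBy p.2

variable [Fintype α] [DecidableEq α]

theorem card_avoidsPairs_lt_factorial {A B : ι → Finset α} {T : Finset (ι × ι)} {p : ι × ι}
    (hp : p ∈ T) {a b : α} (ha : a ∈ A p.1) (hb : b ∈ B p.2) :
    #{π | AvoidsPairs A B T π} < (Fintype.card α)! := by
  rw [← Fintype.card_perm, ← card_univ]
  exact card_lt_card <| filter_ssubset.mpr
    ⟨swap a b, mem_univ _, fun h => h p hp a ha (by rwa [swap_apply_left])⟩

variable [DecidableEq ι]

theorem card_avoidsPairs_eq_swap (A B : ι → Finset α) (T : Finset (ι × ι)) :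
    #{π | AvoidsPairs A B T π} = #{π | AvoidsPairs B A (T.image Prod.swap) π} :=
  card_equiv (Equiv.inv _) fun π => by simp [← avoidsPairs_inv_iff]

theorem card_avoidsPairs_div_lt_of_rows [Fintype ι] (A B : ι → Finset α)
    (hA : Pairwise (Disjoint on A)) (hB : Pairwise (Disjoint on B)) {x y z : ℕ} (hx : 0 < x)
    (hxy : x ≤ y) (hAx : ∀ i, x ≤ #(A i)) (hBy : ∀ j, y ≤ #(B j)) (T : Finset (ι × ι))
    (hz : 0 < z) (hrows : z ≤ #{i | 2 * z ≤ #{p ∈ T | p.1 = i}}) :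
    (#{π | AvoidsPairs A B T π} : ℝ) / (Fintype.card α)! <
      Real.exp (-(x * y * z ^ 2) / Fintype.card α) := by
  obtain ⟨I, hIrows, hIz⟩ := exists_subset_card_eq hrows
  choose A' hA'A hA'x using fun i => exists_subset_card_eq (hAx i)
  set W := I.biUnion A'
  have hW : #W = z * x := by
    rw [card_biUnion fun i _ j _ hij => (hA hij).mono (hA'A i) (hA'A j)]
    simp [hA'x, hIz]
  set C : α → Finset α := fun a => {p ∈ T | a ∈ A p.1}.biUnion fun p => B p.2
  have hC : ∀ a ∈ W, 2 * z * y ≤ #(C a) := by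
    intro a ha
    obtain ⟨i, hi, hai⟩ := mem_biUnion.mp ha
    have hdeg := (mem_filter.mp (hIrows hi)).2
    calc 2 * z * y ≤ #{p ∈ T | p.1 = i} * y := Nat.mul_le_mul_right y hdeg
      _ ≤ #({p ∈ T | p.1 = i}.biUnion fun p => B p.2) :=
        card_filter_fst_eq_mul_le_card_biUnion B hB hBy T i
      _ ≤ #(C a) := card_le_card <| biUnion_subset_biUnion_of_subset_left _ <|
        monotone_filter_right _ fun p _ hp => hp ▸ hA'A i hai
  have havoid : #{π | AvoidsPairs A B T π} ≤ #{π : Perm α | ∀ a ∈ W, π a ∉ C a} :=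
    card_le_card <| monotone_filter_right _ fun π _ hπ a _ haC => by
      obtain ⟨p, hp, hπa⟩ := mem_biUnion.mp haC
      exact hπ p (mem_filter.mp hp).1 a (mem_filter.mp hp).2 hπa
  have hWc : #W ≤ 2 * z * y := by rw [hW]; nlinarith
  calc (#{π | AvoidsPairs A B T π} : ℝ) / (Fintype.card α)!
      ≤ (#{π : Perm α | ∀ a ∈ W, π a ∉ C a} : ℝ) / (Fintype.card α)! := by gcongr
    _ < Real.exp (-(((2 * z * y : ℕ) + 1 - #W) * #W) / Fintype.card α) :=
      Perm.card_filter_forall_mem_apply_notMem_div_lt W C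
        (card_pos.mp (by rw [hW]; positivity)) hWc hC
    _ ≤ Real.exp (-(x * y * z ^ 2) / Fintype.card α) := by
      have hxyz : (x * y * z ^ 2 : ℝ) ≤ ((2 * z * y : ℕ) + 1 - (z * x : ℕ)) * (z * x : ℕ) := by
        have : (x : ℝ) ≤ y := by exact_mod_cast hxy
        push_cast
        nlinarith [mul_nonneg (mul_nonneg (z.cast_nonneg (α := ℝ)) (x.cast_nonneg (α := ℝ)))
          (sub_nonneg.mpr this)]
      rw [hW]
      exact Real.exp_le_exp.mpr (div_le_div_of_nonneg_right (neg_le_neg hxyz) (Nat.cast_nonneg _))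

theorem card_avoidsPairs_div_lt [Fintype ι] (A B : ι → Finset α)
    (hA : Pairwise (Disjoint on A)) (hB : Pairwise (Disjoint on B)) {x y z : ℕ} (hx : 0 < x)
    (hy : 0 < y) (hAx : ∀ i, x ≤ #(A i)) (hBy : ∀ j, y ≤ #(B j)) (T : Finset (ι × ι))
    (hz : 0 < z) (hzd : 2 * z ≤ Fintype.card ι)
    (hzT : 3 * Fintype.card ι * z ≤ #T + 2 * z ^ 2) :
    (#{π | AvoidsPairs A B T π} : ℝ) / (Fintype.card α)! <
      Real.exp (-(x * y * z ^ 2) / Fintype.card α) := by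
  rcases le_total x y with hxy | hyx
  · exact card_avoidsPairs_div_lt_of_rows A B hA hB hx hxy hAx hBy T hz
      (le_card_filter_two_mul_le_card_filter_fst T hzd hzT)
  · have hswap : #(T.image Prod.swap) = #T := card_image_of_injective _ Prod.swap_injective
    rw [card_avoidsPairs_eq_swap, mul_comm (x : ℝ)]
    exact card_avoidsPairs_div_lt_of_rows B A hB hA hy hyx hBy hAx _ hz
      (le_card_filter_two_mul_le_card_filter_fst _ hzd (hswap ▸ hzT))

theorem card_avoidsPairs_div_lt_exp_floor [Fintype ι] (A B : ι → Finset α)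
    (hA : Pairwise (Disjoint on A)) (hB : Pairwise (Disjoint on B)) {x y : ℕ} (hx : 0 < x)
    (hy : 0 < y) (hAx : ∀ i, x ≤ #(A i)) (hBy : ∀ j, y ≤ #(B j)) {T : Finset (ι × ι)}
    (hT : T.Nonempty) :
    (#{π | AvoidsPairs A B T π} : ℝ) / (Fintype.card α)! < Real.exp (-(x * y) / Fintype.card α *
      ⌊(3 * (Fintype.card ι : ℝ) - √(9 * Fintype.card ι ^ 2 - 8 * #T)) / 4⌋₊ ^ 2) := by
  have hTd : #T ≤ Fintype.card ι ^ 2 := (card_le_univ T).trans_eq (by simp [sq])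
  set z := ⌊(3 * (Fintype.card ι : ℝ) - √(9 * Fintype.card ι ^ 2 - 8 * #T)) / 4⌋₊
  obtain ⟨hzd, hzT⟩ := two_mul_le_and_le_of_le_root hTd (Nat.floor_le (smaller_root_nonneg _ _))
  rcases z.eq_zero_or_pos with hz | hz
  · obtain ⟨p, hp⟩ := hT
    obtain ⟨a, ha⟩ := card_pos.mp (hx.trans_le (hAx p.1))
    obtain ⟨b, hb⟩ := card_pos.mp (hy.trans_le (hBy p.2))
    rw [hz, Nat.cast_zero, zero_pow two_ne_zero, mul_zero, Real.exp_zero,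
      div_lt_one (by positivity)]
    exact_mod_cast card_avoidsPairs_lt_factorial hp ha hb
  · convert card_avoidsPairs_div_lt A B hA hB hx hy hAx hBy T hz hzd hzT using 2
    ring

-- Reads the block `{k + 1, …, k + n}` of `ℕ` as `Fin n`.
def finShift (k n : ℕ) (s : Finset ℕ) : Finset (Fin n) :=
  {a : Fin n | k + a + 1 ∈ s}

@[simp]
theorem mem_finShift {k n : ℕ} {s : Finset ℕ} {a : Fin n} :
    a ∈ finShift k n s ↔ k + a + 1 ∈ s := by
  simp [finShift]

theorem card_finShift {k n : ℕ} {s : Finset ℕ} (hs : s ⊆ Icc (k + 1) (k + n)) :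
    #(finShift k n s) = #s := by
  refine card_bij (fun a _ => k + a + 1) (fun a => mem_finShift.mp) (fun a _ b _ h => by omega)
    fun m hm => ?_
  have := mem_Icc.mp (hs hm)
  exact ⟨⟨m - k - 1, by omega⟩, mem_finShift.mpr (by convert hm using 1; simp; omega),
    by simp; omega⟩

theorem disjoint_finShift {k n : ℕ} {s t : Finset ℕ} (h : Disjoint s t) :
    Disjoint (finShift k n s) (finShift k n t) :=
  disjoint_left.mpr fun _ has hat =>
    disjoint_left.mp h (mem_finShift.mp has) (mem_finShift.mp hat)

open Classical in
theorem stmt6 (d n r S : ℕ) (hd : 0 < d) (hr : 0 < r) (hS : 0 < S)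
    (X Y : Fin d → Finset ℕ)
    (hX : ∀ i, X i ⊆ Finset.Icc 1 n) (hY : ∀ j, Y j ⊆ Finset.Icc (n + 1) (2 * n))
    (hXd : ∀ i j : Fin d, i ≠ j → Disjoint (X i) (X j))
    (hYd : ∀ i j : Fin d, i ≠ j → Disjoint (Y i) (Y j))
    (hXm : ∀ i j : Fin d, i ≤ j → (X j).card ≤ (X i).card)
    (hYm : ∀ i j : Fin d, i ≤ j → (Y j).card ≤ (Y i).card)
    (hlast : S ≤ (X ⟨d - 1, by omega⟩).card * (Y ⟨d - 1, by omega⟩).card)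
    (T : Finset (Fin d × Fin d)) (hT : T.card = r) :
    ((Finset.univ.filter (fun π : Equiv.Perm (Fin n) =>
        ∀ p ∈ T, ∀ a : Fin n, (a : ℕ) + 1 ∈ X p.1 → n + (π a : ℕ) + 1 ∉ Y p.2)).card : ℝ)
      / (Nat.factorial n) <
    Real.exp (-(S : ℝ) / n *
      ((⌊(3 * (d : ℝ) - Real.sqrt (9 * (d : ℝ) ^ 2 - 8 * r)) / 4⌋ : ℝ)) ^ 2) := by
  set A : Fin d → Finset (Fin n) := fun i => finShift 0 n (X i)
  set B : Fin d → Finset (Fin n) := fun j => finShift n n (Y j)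
  have hevent : (Finset.univ.filter (fun π : Equiv.Perm (Fin n) =>
      ∀ p ∈ T, ∀ a : Fin n, (a : ℕ) + 1 ∈ X p.1 → n + (π a : ℕ) + 1 ∉ Y p.2)) =
      ({π | AvoidsPairs A B T π} : Finset _) := by
    ext π
    simp [A, B, AvoidsPairs]
  set last : Fin d := ⟨d - 1, by omega⟩
  have hAx : ∀ i, #(X last) ≤ #(A i) := fun i => by
    rw [card_finShift (by simpa using hX i)]
    exact hXm i last (Nat.le_sub_one_of_lt i.2)
  have hBy : ∀ j, #(Y last) ≤ #(B j) := fun j => by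
    rw [card_finShift (by simpa [two_mul] using hY j)]
    exact hYm j last (Nat.le_sub_one_of_lt j.2)
  have hxy : 0 < #(X last) * #(Y last) := hS.trans_le hlast
  have hbound := card_avoidsPairs_div_lt_exp_floor A B (fun i j h => disjoint_finShift (hXd i j h))
    (fun i j h => disjoint_finShift (hYd i j h)) (pos_of_mul_pos_left hxy (Nat.zero_le _))
    (pos_of_mul_pos_right hxy (Nat.zero_le _)) hAx hBy (card_pos.mp (hT ▸ hr))
  simp only [Fintype.card_fin, hT] at hbound
  rw [hevent, ← natCast_floor_eq_intCast_floor (smaller_root_nonneg d r)]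
  refine hbound.trans_le (Real.exp_le_exp.mpr ?_)
  gcongr
  exact_mod_cast hlast
end

section
/- Let M, n, s, t be positive integers with M ≤ C(t,2) + t, let ρ > 0 and δ > 0 be reals with ⌈ρn⌉ even, and suppose t^n · C(t², M) · C(s²M, ⌈ρn⌉/2) < δD, where D is the number of ρ-regular graphs on vertex set [n]. Then, with probability at least 1 − δ, the uniformly random ρ-regular graph G(ρ, n) has the property that for every partition of [n] into sets X₁,…,X_t each of size at most s, more than M of the pairs (X_i, X_j) with 1 ≤ i ≤ j ≤ t satisfy e_{G(ρ,n)}(X_i, X_j) > 0. -/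
/-!
Union bound. If a graph admits a partition into `t` classes of size at most `s` that spans at
most `M` class pairs, record the class map `f : [n] → [t]` (at most `t ^ n` choices) and a set
`P` of exactly `M` unordered class pairs containing every pair that carries an edge (at most
`C(t², M)` choices). Given `(f, P)`, all `⌈ρn⌉/2` edges lie among the at most `s² M` vertex
pairs whose class pair is in `P`, so there are at most `C(s² M, ⌈ρn⌉/2)` such graphs. Hence
fewer than `δ D` of the `D` ρ-regular graphs fail the property.
-/

open Finset

section

open Classical

variable {V ι : Type*} [Fintype V]

namespace Sym2

lemma card_filter_map_eq_le {f : V → ι} {s : ℕ} (hf : ∀ i, #{v | f v = i} ≤ s)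
    (q : Sym2 ι) : #{e : Sym2 V | e.map f = q} ≤ s ^ 2 := by
  induction q using Sym2.ind with
  | _ i j =>
  calc #{e : Sym2 V | e.map f = s(i, j)}
      ≤ #((({v | f v = i} : Finset V) ×ˢ ({v | f v = j} : Finset V)).image
          (Function.uncurry Sym2.mk)) := by
        refine card_le_card fun e he => ?_
        induction e using Sym2.ind with
        | _ a b =>
        simp only [mem_filter, mem_univ, true_and, map_mk, eq_iff] at he
        simp only [mem_image, mem_product, mem_filter, mem_univ, true_and, Prod.exists,
          Function.uncurry_apply_pair]
        rcases he with ⟨ha, hb⟩ | ⟨ha, hb⟩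
        · exact ⟨a, b, ⟨ha, hb⟩, rfl⟩
        · exact ⟨b, a, ⟨hb, ha⟩, eq_swap⟩
    _ ≤ #({v | f v = i} : Finset V) * #({v | f v = j} : Finset V) :=
        card_image_le.trans (card_product _ _).le
    _ ≤ s ^ 2 := sq s ▸ Nat.mul_le_mul (hf i) (hf j)

lemma card_filter_map_mem_le {f : V → ι} {s : ℕ} (hf : ∀ i, #{v | f v = i} ≤ s)
    (P : Finset (Sym2 ι)) : #{e : Sym2 V | e.map f ∈ P} ≤ s ^ 2 * #P := by
  refine (card_le_mul_card_image (f := map f) _ _ fun q _ => ?_).trans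
    (Nat.mul_le_mul_left _ (card_le_card fun q hq => ?_))
  · refine le_trans (card_le_card fun e he => ?_) (card_filter_map_eq_le hf q)
    exact mem_filter.2 ⟨mem_univ _, (mem_filter.1 he).2⟩
  · obtain ⟨e, he, rfl⟩ := mem_image.1 hq
    exact (mem_filter.1 he).2

end Sym2

namespace SimpleGraph

lemma card_filter_edgeFinset_subset_le (S : Finset (Sym2 V)) (m : ℕ) :
    #{G : SimpleGraph V | #G.edgeFinset = m ∧ G.edgeFinset ⊆ S} ≤ (#S).choose m := by
  rw [← card_powersetCard]
  refine card_le_card_of_injOn (fun G => G.edgeFinset) (fun G hG => ?_)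
    fun G _ G' _ h => edgeFinset_inj.1 h
  have hG := (mem_filter.1 (mem_coe.1 hG)).2
  exact mem_coe.2 (mem_powersetCard.2 ⟨hG.2, hG.1⟩)

section TotalOrder

variable [LE ι] [Std.Total (· ≤ · : ι → ι → Prop)] [Fintype ι]

/-- The pairs `(i, j)` with `i ≤ j` enumerate the unordered class pairs `Sym2 ι`. -/
lemma card_image_map_edgeFinset_le (G : SimpleGraph V) {X : ι → Finset V}
    [DecidablePred fun p : ι × ι => p.1 ≤ p.2 ∧ ∃ a ∈ X p.1, ∃ b ∈ X p.2, G.Adj a b]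
    {f : V → ι} (hf : ∀ v, v ∈ X (f v)) :
    #(G.edgeFinset.image (Sym2.map f)) ≤
      #{p : ι × ι | p.1 ≤ p.2 ∧ ∃ a ∈ X p.1, ∃ b ∈ X p.2, G.Adj a b} := by
  refine le_trans (card_le_card fun q hq => ?_) (card_image_le (f := Function.uncurry Sym2.mk))
  obtain ⟨e, he, rfl⟩ := mem_image.1 hq
  induction e using Sym2.ind with
  | _ a b =>
  rw [mem_edgeFinset, mem_edgeSet] at he
  simp only [Sym2.map_mk, mem_image, mem_filter, mem_univ, true_and, Prod.exists]
  rcases total_of (· ≤ ·) (f a) (f b) with h | h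
  · exact ⟨f a, f b, ⟨h, a, hf a, b, hf b, he⟩, rfl⟩
  · exact ⟨f b, f a, ⟨h, b, hf b, a, hf a, he.symm⟩, Sym2.eq_swap⟩

lemma exists_coloring_of_cover (G : SimpleGraph V) {s M : ℕ} (hM : M ≤ Fintype.card (Sym2 ι))
    (X : ι → Finset V)
    [DecidablePred fun p : ι × ι => p.1 ≤ p.2 ∧ ∃ a ∈ X p.1, ∃ b ∈ X p.2, G.Adj a b]
    (hcover : ∀ v, ∃ i, v ∈ X i) (hsize : ∀ i, #(X i) ≤ s)
    (hpairs : #{p : ι × ι | p.1 ≤ p.2 ∧ ∃ a ∈ X p.1, ∃ b ∈ X p.2, G.Adj a b} ≤ M) :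
    ∃ f : V → ι, (∀ i, #{v | f v = i} ≤ s) ∧
      ∃ P : Finset (Sym2 ι), #P = M ∧ ∀ e ∈ G.edgeFinset, e.map f ∈ P := by
  choose f hf using hcover
  obtain ⟨P, hP, -, hPcard⟩ := exists_subsuperset_card_eq (subset_univ _)
    ((card_image_map_edgeFinset_le G hf).trans hpairs) hM
  refine ⟨f, fun i => le_trans (card_le_card fun v hv => ?_) (hsize i), P, hPcard,
    fun e he => hP (mem_image_of_mem _ he)⟩
  exact (mem_filter.1 hv).2 ▸ hf v

end TotalOrder

theorem card_filter_exists_coloring_le [Fintype ι] (s M m : ℕ) :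
    #{G : SimpleGraph V | #G.edgeFinset = m ∧ ∃ f : V → ι, (∀ i, #{v | f v = i} ≤ s) ∧
        ∃ P : Finset (Sym2 ι), #P = M ∧ ∀ e ∈ G.edgeFinset, e.map f ∈ P} ≤
      Fintype.card ι ^ Fintype.card V * (Fintype.card ι ^ 2).choose M * (s ^ 2 * M).choose m := by
  set W := ({f : V → ι | ∀ i, #{v | f v = i} ≤ s} : Finset (V → ι)) ×ˢ
    (univ : Finset (Sym2 ι)).powersetCard M
  have hW : #W ≤ Fintype.card ι ^ Fintype.card V * (Fintype.card ι ^ 2).choose M := by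
    rw [card_product, card_powersetCard, card_univ]
    refine Nat.mul_le_mul ((card_filter_le _ _).trans (by simp)) (Nat.choose_le_choose _ ?_)
    exact (Fintype.card_le_of_surjective _ Sym2.mk_surjective).trans (by simp [sq])
  calc _ ≤ #(W.biUnion fun fP => {G : SimpleGraph V | #G.edgeFinset = m ∧
          G.edgeFinset ⊆ ({e | e.map fP.1 ∈ fP.2} : Finset (Sym2 V))}) := by
        refine card_le_card fun G hG => ?_
        obtain ⟨hm, f, hf, P, hP, hE⟩ := (mem_filter.1 hG).2
        refine mem_biUnion.2 ⟨(f, P), ?_, mem_filter.2 ⟨mem_univ _, hm, fun e he => ?_⟩⟩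
        · simpa [W, mem_powersetCard] using ⟨hf, hP⟩
        · exact mem_filter.2 ⟨mem_univ _, hE e he⟩
    _ ≤ #W * (s ^ 2 * M).choose m := by
        refine card_biUnion_le_card_mul _ _ _ fun fP hfP => ?_
        simp only [W, mem_product, mem_filter, mem_univ, true_and, mem_powersetCard] at hfP
        refine (card_filter_edgeFinset_subset_le _ m).trans (Nat.choose_le_choose _ ?_)
        exact hfP.2.2 ▸ Sym2.card_filter_map_mem_le hfP.1 fP.2
    _ ≤ _ := Nat.mul_le_mul_right _ hW

end SimpleGraph

end

open Classical in
theorem stmt8_general (M n s t : ℕ)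
    (hMt : M ≤ t.choose 2 + t) (ρ δ : ℝ)
    (D good : ℕ)
    (hD : D = (Finset.univ.filter (fun G : SimpleGraph (Fin n) =>
        (∀ v, G.degree v = ⌊ρ⌋₊ ∨ G.degree v = ⌈ρ⌉₊) ∧
        G.edgeFinset.card = ⌈ρ * n⌉₊ / 2)).card)
    (hineq : (t : ℝ) ^ n * ((t ^ 2).choose M : ℝ) *
        (((s ^ 2 * M).choose (⌈ρ * n⌉₊ / 2) : ℝ)) < δ * D)
    (hgood : good = (Finset.univ.filter (fun G : SimpleGraph (Fin n) =>
        ((∀ v, G.degree v = ⌊ρ⌋₊ ∨ G.degree v = ⌈ρ⌉₊) ∧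
          G.edgeFinset.card = ⌈ρ * n⌉₊ / 2) ∧
        ∀ X : Fin t → Finset (Fin n),
          (∀ i j, i ≠ j → Disjoint (X i) (X j)) →
          (∀ v, ∃ i, v ∈ X i) → (∀ i, (X i).card ≤ s) →
          M < (Finset.univ.filter (fun p : Fin t × Fin t =>
            p.1 ≤ p.2 ∧ ∃ a ∈ X p.1, ∃ b ∈ X p.2, G.Adj a b)).card)).card) :
    (1 - δ) * (D : ℝ) ≤ (good : ℝ) := by
  set regular := fun G : SimpleGraph (Fin n) => (∀ v, G.degree v = ⌊ρ⌋₊ ∨ G.degree v = ⌈ρ⌉₊) ∧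
    #G.edgeFinset = ⌈ρ * n⌉₊ / 2
  set spread := fun G : SimpleGraph (Fin n) => ∀ X : Fin t → Finset (Fin n),
    (∀ i j, i ≠ j → Disjoint (X i) (X j)) → (∀ v, ∃ i, v ∈ X i) → (∀ i, #(X i) ≤ s) →
      M < #{p : Fin t × Fin t | p.1 ≤ p.2 ∧ ∃ a ∈ X p.1, ∃ b ∈ X p.2, G.Adj a b}
  have hsplit : D = good + #{G | regular G ∧ ¬ spread G} := by
    have := card_filter_add_card_filter_not (s := ({G | regular G} : Finset _)) spread
    rw [filter_filter, filter_filter] at this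
    rw [hD, hgood, this]
  have hM : M ≤ Fintype.card (Sym2 (Fin t)) := by
    simpa [Sym2.card, Nat.choose_succ_succ', add_comm] using hMt
  have hbad : #{G | regular G ∧ ¬ spread G} ≤
      t ^ n * (t ^ 2).choose M * (s ^ 2 * M).choose (⌈ρ * n⌉₊ / 2) := by
    have hcount := SimpleGraph.card_filter_exists_coloring_le (V := Fin n) (ι := Fin t) s M
      (⌈ρ * n⌉₊ / 2)
    rw [Fintype.card_fin, Fintype.card_fin] at hcount
    refine (card_le_card fun G hG => ?_).trans hcount
    simp only [mem_filter, mem_univ, true_and, spread, not_forall, not_lt] at hG ⊢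
    obtain ⟨⟨-, hm⟩, X, -, hcover, hsize, hpairs⟩ := hG
    exact ⟨hm, SimpleGraph.exists_coloring_of_cover G hM X hcover hsize hpairs⟩
  have hbadR : (#{G | regular G ∧ ¬ spread G} : ℝ) < δ * D :=
    lt_of_le_of_lt (by exact_mod_cast hbad) hineq
  rw [hsplit] at hbadR ⊢
  push_cast at hbadR ⊢
  linarith

open Classical in
theorem stmt8 (M n s t : ℕ) (hM : 0 < M) (hn : 0 < n) (hs : 0 < s) (ht : 0 < t)
    (hMt : M ≤ t.choose 2 + t) (ρ δ : ℝ) (hρ : 0 < ρ) (hδ : 0 < δ)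
    (heven : Even ⌈ρ * n⌉₊)
    (D good : ℕ)
    (hD : D = (Finset.univ.filter (fun G : SimpleGraph (Fin n) =>
        (∀ v, G.degree v = ⌊ρ⌋₊ ∨ G.degree v = ⌈ρ⌉₊) ∧
        G.edgeFinset.card = ⌈ρ * n⌉₊ / 2)).card)
    (hineq : (t : ℝ) ^ n * ((t ^ 2).choose M : ℝ) *
        (((s ^ 2 * M).choose (⌈ρ * n⌉₊ / 2) : ℝ)) < δ * D)
    (hgood : good = (Finset.univ.filter (fun G : SimpleGraph (Fin n) =>
        ((∀ v, G.degree v = ⌊ρ⌋₊ ∨ G.degree v = ⌈ρ⌉₊) ∧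
          G.edgeFinset.card = ⌈ρ * n⌉₊ / 2) ∧
        ∀ X : Fin t → Finset (Fin n),
          (∀ i j, i ≠ j → Disjoint (X i) (X j)) →
          (∀ v, ∃ i, v ∈ X i) → (∀ i, (X i).card ≤ s) →
          M < (Finset.univ.filter (fun p : Fin t × Fin t =>
            p.1 ≤ p.2 ∧ ∃ a ∈ X p.1, ∃ b ∈ X p.2, G.Adj a b)).card)).card) :
    (1 - δ) * (D : ℝ) ≤ (good : ℝ) :=
  stmt8_general M n s t hMt ρ δ D good hD hineq hgood
end

section
/- Every ordered matching with 2n vertices and interval chromatic number two satisfies OR(M) ≤ 2n². That is, every 2-coloring of the edges of the ordered complete graph on 2n² vertices contains a monochromatic ordered copy of M. -/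
/-!
Cut `[2n²]` into `2n` consecutive blocks of `n` vertices, `B₁ < ⋯ < Bₙ < C₁ < ⋯ < Cₙ`.
If for every `i` some edge between `Bᵢ` and `C_{π(i)}` is red, one such edge per `i` gives a red
copy of `M`, since the blocks are ordered like the vertices of `M`. Otherwise all edges between
some `Bᵢ` and `C_{π(i)}` are blue, and `M` embeds in blue with its left vertices in `Bᵢ` and its
right vertices in `C_{π(i)}`.
-/

/-- The ordered matching with interval chromatic number two given by a permutation `π` of
`[n]`: vertex set `[2n]`, edges `{i, n + π(i)}` (0-indexed). -/
def permMatching (n : ℕ) (π : Equiv.Perm (Fin n)) : SimpleGraph (Fin (2 * n)) :=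
  SimpleGraph.fromRel (fun a b => ∃ i : Fin n, (a : ℕ) = (i : ℕ) ∧ (b : ℕ) = n + (π i : ℕ))

theorem Nat.mul_add_lt_mul_add {n a a' b b' : ℕ} (hb : b < n) (ha : a < a') :
    a * n + b < a' * n + b' :=
  calc a * n + b < (a + 1) * n := by rw [Nat.succ_mul]; omega
    _ ≤ a' * n := Nat.mul_le_mul_right n ha
    _ ≤ a' * n + b' := Nat.le_add_right _ _

theorem Fin.castAdd_lt_natAdd {m n : ℕ} (i : Fin m) (j : Fin n) :
    Fin.castAdd n i < Fin.natAdd m j := by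
  simp only [Fin.lt_def, Fin.val_castAdd, Fin.val_natAdd]
  omega

theorem Fin.strictMono_append {α : Type*} [Preorder α] {m n : ℕ} {u : Fin m → α}
    {v : Fin n → α} (hu : StrictMono u) (hv : StrictMono v) (huv : ∀ i j, u i < v j) :
    StrictMono (Fin.append u v) := by
  intro a b hab
  induction a using Fin.addCases with
  | left i =>
    induction b using Fin.addCases with
    | left j => simpa only [Fin.append_left] using hu hab
    | right j => simpa only [Fin.append_left, Fin.append_right] using huv i j
  | right i =>
    induction b using Fin.addCases with
    | left j => exact absurd hab (Fin.castAdd_lt_natAdd j i).asymm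
    | right j => simpa only [Fin.append_right] using hv ((Fin.natAdd_lt_natAdd_iff m).mp hab)

theorem permMatching_adj_iff {n : ℕ} {π : Equiv.Perm (Fin n)} {u v : Fin (2 * n)} :
    (permMatching n π).Adj u v ↔ ∃ i : Fin n,
      (Fin.cast (two_mul n) u = Fin.castAdd n i ∧ Fin.cast (two_mul n) v = Fin.natAdd n (π i)) ∨
      (Fin.cast (two_mul n) v = Fin.castAdd n i ∧ Fin.cast (two_mul n) u = Fin.natAdd n (π i)) := by
  simp only [permMatching, SimpleGraph.fromRel_adj, Fin.ext_iff, Fin.val_cast, Fin.val_castAdd,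
    Fin.val_natAdd]
  constructor
  · rintro ⟨-, ⟨i, h⟩ | ⟨i, h⟩⟩
    exacts [⟨i, .inl h⟩, ⟨i, .inr h⟩]
  · rintro ⟨i, ⟨hu, hv⟩ | ⟨hv, hu⟩⟩
    · exact ⟨fun _ => by omega, .inl ⟨i, hu, hv⟩⟩
    · exact ⟨fun _ => by omega, .inr ⟨i, hv, hu⟩⟩

theorem exists_strictMono_monochromatic_permMatching {α β : Type*} [Preorder α] {n : ℕ}
    (π : Equiv.Perm (Fin n)) (c : Sym2 α → β) {L R : Fin n → α} (hL : StrictMono L)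
    (hR : StrictMono R) (hLR : ∀ i j, L i < R j) {col : β} (hcol : ∀ i, c s(L i, R (π i)) = col) :
    ∃ f : Fin (2 * n) → α, StrictMono f ∧
      ∀ u v, (permMatching n π).Adj u v → c s(f u, f v) = col := by
  refine ⟨Fin.append L R ∘ Fin.cast (two_mul n),
    (Fin.strictMono_append hL hR hLR).comp (Fin.cast_strictMono _), fun u v huv => ?_⟩
  obtain ⟨i, ⟨hu, hv⟩ | ⟨hv, hu⟩⟩ := permMatching_adj_iff.mp huv
  · simp only [Function.comp_apply, hu, hv, Fin.append_left, Fin.append_right, hcol]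
  · simp only [Function.comp_apply, hu, hv, Fin.append_left, Fin.append_right, Sym2.eq_swap, hcol]

section Blocks

variable {n : ℕ}

def blockVertex (b : Fin (n + n)) (k : Fin n) : Fin (2 * n ^ 2) :=
  ⟨b * n + k, calc _ < (n + n) * n + 0 := Nat.mul_add_lt_mul_add k.isLt b.isLt
    _ = 2 * n ^ 2 := by ring⟩

theorem blockVertex_lt_blockVertex {b b' : Fin (n + n)} (k k' : Fin n) (h : b < b') :
    blockVertex b k < blockVertex b' k' :=
  Nat.mul_add_lt_mul_add k.isLt h

theorem blockVertex_strictMono (b : Fin (n + n)) : StrictMono (blockVertex b) :=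
  fun _ _ h => Nat.add_lt_add_left h _

end Blocks

theorem stmt12_general (n : ℕ) (π : Equiv.Perm (Fin n))
    (c : Sym2 (Fin (2 * n ^ 2)) → Bool) :
    ∃ f : Fin (2 * n) → Fin (2 * n ^ 2), StrictMono f ∧ ∃ col : Bool,
      ∀ u v, (permMatching n π).Adj u v → c s(f u, f v) = col := by
  by_cases H : ∀ i, ∃ k l,
      c s(blockVertex (Fin.castAdd n i) k, blockVertex (Fin.natAdd n (π i)) l) = true
  · choose a b hab using H
    obtain ⟨f, hf, hc⟩ := exists_strictMono_monochromatic_permMatching π c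
      (L := fun i => blockVertex (Fin.castAdd n i) (a i))
      (R := fun j => blockVertex (Fin.natAdd n j) (b (π.symm j)))
      (fun _ _ h => blockVertex_lt_blockVertex _ _ (Fin.strictMono_castAdd n h))
      (fun _ _ h => blockVertex_lt_blockVertex _ _ (Fin.strictMono_natAdd n h))
      (fun i j => blockVertex_lt_blockVertex _ _ (Fin.castAdd_lt_natAdd i j))
      (fun i => by simpa only [Equiv.symm_apply_apply] using hab i)
    exact ⟨f, hf, true, hc⟩
  · simp only [not_forall, not_exists, Bool.not_eq_true] at H
    obtain ⟨i₀, hi₀⟩ := H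
    obtain ⟨f, hf, hc⟩ := exists_strictMono_monochromatic_permMatching π c
      (blockVertex_strictMono (Fin.castAdd n i₀)) (blockVertex_strictMono (Fin.natAdd n (π i₀)))
      (fun k l => blockVertex_lt_blockVertex k l (Fin.castAdd_lt_natAdd i₀ (π i₀)))
      (col := false) (fun k => hi₀ k (π k))
    exact ⟨f, hf, false, hc⟩

theorem stmt12 (n : ℕ) (hn : 0 < n) (π : Equiv.Perm (Fin n))
    (c : Sym2 (Fin (2 * n ^ 2)) → Bool) :
    ∃ f : Fin (2 * n) → Fin (2 * n ^ 2), StrictMono f ∧ ∃ col : Bool,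
      ∀ u v, (permMatching n π).Adj u v → c s(f u, f v) = col :=
  stmt12_general n π c
end

section
/- Every bipartite 2-regular graph G on n vertices (a disjoint union of even cycles) admits an ordering 𝒢 such that 𝒢 is an ordered subgraph of the 2-blow-up P²_n of the alternating path on n vertices. -/
/-- The `k`-blow-up of the alternating path on `n` vertices. -/
def blowup (k n : ℕ) : SimpleGraph (Fin (k * n)) :=
  SimpleGraph.fromRel (fun a b => pathRel n ((a : ℕ) / k) ((b : ℕ) / k))

/-!
Lay the cycles out one after another along an ordinary path, each cycle by breadth-first search
from one of its vertices: a vertex at distance `d` goes to level `d`. Since the graph is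
bipartite, adjacent vertices lie on consecutive levels, and since degrees are at most two, every
level holds at most two vertices. The levels are thus blocks of the 2-blow-up of a path on `n`
vertices, and `altPos` carries that path onto the alternating path.
-/

open Finset

namespace SimpleGraph

variable {V : Type*} {G : SimpleGraph V} {b u v : V}

lemma exists_adj_dist_eq_of_dist_eq_add_one {k : ℕ} (h : G.dist b v = k + 1) :
    ∃ u, G.Adj u v ∧ G.dist b u = k := by
  obtain ⟨p, hp⟩ := exists_walk_of_dist_ne_zero (by omega : G.dist b v ≠ 0)
  have hlen : p.reverse.length = k + 1 := by rw [Walk.length_reverse, hp, h]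
  generalize p.reverse = q at hlen
  cases q with
  | nil => simp at hlen
  | @cons _ u _ hvu q =>
    have hu : G.dist b u ≤ k := (dist_le q.reverse).trans (by simp at hlen; simp [hlen])
    refine ⟨u, hvu.symm, ?_⟩
    rcases hvu.symm.diff_dist_adj (u := b) with h' | h' | h' <;> omega

lemma Coloring.even_dist_iff (c : G.Coloring Bool) (h : G.Reachable b v) :
    Even (G.dist b v) ↔ (c b ↔ c v) := by
  obtain ⟨p, hp⟩ := h.exists_walk_length_eq_dist
  rw [← hp, c.even_length_iff_congr p]

lemma Coloring.dist_add_one_eq_or (c : G.Coloring Bool) (hu : G.Reachable b u) (h : G.Adj u v) :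
    G.dist b u + 1 = G.dist b v ∨ G.dist b v + 1 = G.dist b u := by
  have hne : G.dist b u ≠ G.dist b v := fun heq => c.valid h <| by
    have hu' := c.even_dist_iff hu
    have hv' := c.even_dist_iff (hu.trans h.reachable)
    rw [heq] at hu'
    rw [Bool.eq_iff_iff]
    tauto
  rcases h.diff_dist_adj (u := b) with h' | h' | h' <;> omega

section Degree

variable [G.LocallyFinite]

lemma eq_or_eq_or_eq_of_adj (hdeg : ∀ v, G.degree v ≤ 2) {x y z : V} (hx : G.Adj u x)
    (hy : G.Adj u y) (hz : G.Adj u z) : x = y ∨ x = z ∨ y = z := by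
  by_contra! hne
  have : 2 < G.degree u := by
    rw [← card_neighborFinset_eq_degree]
    exact two_lt_card.2 ⟨x, by simpa, y, by simpa, z, by simpa, hne⟩
  exact (hdeg u).not_gt this

lemma eq_of_adj_of_dist_eq_add_one (hdeg : ∀ v, G.degree v ≤ 2) {p x y : V} {k : ℕ}
    (hp : G.dist b p = k + 1) (hx : G.Adj p x) (hy : G.Adj p y) (hdx : G.dist b x = k + 2)
    (hdy : G.dist b y = k + 2) : x = y := by
  obtain ⟨w, hw, hdw⟩ := exists_adj_dist_eq_of_dist_eq_add_one hp
  rcases eq_or_eq_or_eq_of_adj hdeg hx hy hw.symm with h | rfl | rfl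
  · exact h
  all_goals omega

lemma eq_or_eq_or_eq_of_dist_eq (hdeg : ∀ v, G.degree v ≤ 2) : ∀ {k : ℕ} {x y z : V},
    G.Reachable b x → G.Reachable b y → G.Reachable b z →
    G.dist b x = k → G.dist b y = k → G.dist b z = k → x = y ∨ x = z ∨ y = z
  | 0, _, _, _, hx, hy, _, hdx, hdy, _ =>
    .inl <| ((hx.dist_eq_zero_iff).1 hdx).symm.trans ((hy.dist_eq_zero_iff).1 hdy)
  | 1, _, _, _, _, _, _, hdx, hdy, hdz =>
    eq_or_eq_or_eq_of_adj hdeg (dist_eq_one_iff_adj.1 hdx) (dist_eq_one_iff_adj.1 hdy)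
      (dist_eq_one_iff_adj.1 hdz)
  | k + 2, _, _, _, _, _, _, hdx, hdy, hdz => by
    obtain ⟨px, hpx, hdpx⟩ := exists_adj_dist_eq_of_dist_eq_add_one hdx
    obtain ⟨py, hpy, hdpy⟩ := exists_adj_dist_eq_of_dist_eq_add_one hdy
    obtain ⟨pz, hpz, hdpz⟩ := exists_adj_dist_eq_of_dist_eq_add_one hdz
    have hr {w : V} (hw : G.dist b w = k + 1) : G.Reachable b w := .of_dist_ne_zero (by omega)
    rcases eq_or_eq_or_eq_of_dist_eq hdeg (hr hdpx) (hr hdpy) (hr hdpz) hdpx hdpy hdpz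
      with rfl | rfl | rfl
    · exact .inl (eq_of_adj_of_dist_eq_add_one hdeg hdpx hpx hpy hdx hdy)
    · exact .inr (.inl (eq_of_adj_of_dist_eq_add_one hdeg hdpx hpx hpz hdx hdz))
    · exact .inr (.inr (eq_of_adj_of_dist_eq_add_one hdeg hdpy hpy hpz hdy hdz))

end Degree

variable [Fintype V] [DecidableEq V] [DecidableRel G.Adj]

lemma card_filter_reachable_dist_eq_le_two (hdeg : ∀ v, G.degree v ≤ 2) (b : V) (k : ℕ) :
    #{v | G.Reachable b v ∧ G.dist b v = k} ≤ 2 := by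
  by_contra! h
  obtain ⟨x, hx, y, hy, z, hz, hxy, hxz, hyz⟩ := two_lt_card.1 h
  simp only [mem_filter, mem_univ, true_and] at hx hy hz
  rcases eq_or_eq_or_eq_of_dist_eq hdeg hx.1 hy.1 hz.1 hx.2 hy.2 hz.2 with h | h | h <;>
    contradiction

lemma Reachable.dist_lt_card (h : G.Reachable b v) : G.dist b v < #{w | G.Reachable b w} := by
  obtain ⟨p, hp, hlen⟩ := h.exists_path_of_dist
  calc G.dist b v < p.support.length := by rw [Walk.length_support, hlen]; omega
    _ = #p.support.toFinset := (List.toFinset_card_of_nodup hp.support_nodup).symm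
    _ ≤ _ := card_le_card fun w hw => by
      simp only [List.mem_toFinset] at hw
      simpa using ⟨p.takeUntil w hw⟩

/-- `g` maps `G[S]` into the 2-blow-up of the path `0 - 1 - ⋯ - (#S - 1)`, once each vertex is
given a position inside its block. -/
structure IsPathLayering (G : SimpleGraph V) (S : Finset V) (g : V → ℕ) : Prop where
  lt_card : ∀ v ∈ S, g v < #S
  card_fiber_le_two : ∀ k, #{v ∈ S | g v = k} ≤ 2
  adj : ∀ u ∈ S, ∀ v, G.Adj u v → g u + 1 = g v ∨ g v + 1 = g u

lemma IsPathLayering.extend (hdeg : ∀ v, G.degree v ≤ 2) (c : G.Coloring Bool) {S : Finset V}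
    (hS : ∀ u ∈ S, ∀ v, G.Reachable u v → v ∈ S) (hb : b ∈ S) {g : V → ℕ}
    (hg : IsPathLayering G {v ∈ S | ¬G.Reachable b v} g) :
    IsPathLayering G S fun v =>
      if G.Reachable b v then G.dist b v else #{w | G.Reachable b w} + g v where
  lt_card v hv := by
    have hC : {w ∈ S | G.Reachable b w} = ({w | G.Reachable b w} : Finset V) := by
      ext w
      simpa using hS b hb w
    have hcard := card_filter_add_card_filter_not (s := S) (G.Reachable b)
    rw [hC] at hcard
    split_ifs with hbv
    · have := hbv.dist_lt_card
      omega
    · have := hg.lt_card v (by simp [hv, hbv])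
      omega
  card_fiber_le_two k := by
    obtain hk | hk := lt_or_ge k #{w | G.Reachable b w}
    · refine (card_le_card fun v hv => ?_).trans (card_filter_reachable_dist_eq_le_two hdeg b k)
      simp only [mem_filter, mem_univ, true_and] at hv ⊢
      split_ifs at hv with hbv
      · exact ⟨hbv, hv.2⟩
      · omega
    · refine (card_le_card fun v hv => ?_).trans
        (hg.card_fiber_le_two (k - #{w | G.Reachable b w}))
      simp only [mem_filter] at hv ⊢
      split_ifs at hv with hbv
      · have := hbv.dist_lt_card
        omega
      · exact ⟨⟨hv.1, hbv⟩, by omega⟩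
  adj u hu v huv := by
    by_cases hbu : G.Reachable b u
    · simpa [hbu, hbu.trans huv.reachable] using c.dist_add_one_eq_or hbu huv
    · have hbv : ¬G.Reachable b v := fun hbv => hbu (hbv.trans huv.reachable.symm)
      simp only [hbu, hbv, if_false]
      have := hg.adj u (by simp [hu, hbu]) v huv
      omega

theorem exists_isPathLayering (hdeg : ∀ v, G.degree v ≤ 2) (c : G.Coloring Bool) (S : Finset V)
    (hS : ∀ u ∈ S, ∀ v, G.Reachable u v → v ∈ S) : ∃ g, IsPathLayering G S g := by
  induction S using Finset.strongInduction with
  | H S ih =>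
  obtain rfl | ⟨b, hb⟩ := S.eq_empty_or_nonempty
  · exact ⟨0, ⟨by simp, by simp, by simp⟩⟩
  obtain ⟨g, hg⟩ := ih {v ∈ S | ¬G.Reachable b v}
    (filter_ssubset.2 ⟨b, hb, not_not.2 (.refl b)⟩) <| by
    simp only [mem_filter]
    exact fun u hu v huv => ⟨hS u hu.1 v huv, fun hv => hu.2 (hv.trans huv.symm)⟩
  exact ⟨_, hg.extend hdeg c hS hb⟩

end SimpleGraph

theorem Function.exists_embedding_prod_fin_of_card_fiber_le {α β : Type*} [Fintype α]
    [DecidableEq β] (f : α → β) {k : ℕ} (h : ∀ b, #{a | f a = b} ≤ k) :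
    ∃ F : α ↪ β × Fin k, ∀ a, (F a).1 = f a := by
  have e (b : β) : {a // f a = b} ↪ Fin k :=
    (Function.Embedding.nonempty_of_card_le (by simpa [Fintype.card_subtype] using h b)).some
  exact ⟨(Equiv.sigmaFiberEquiv f).symm.toEmbedding.trans <|
    (Function.Embedding.sigmaMap (.refl β) e).trans (Equiv.sigmaEquivProd β (Fin k)).toEmbedding,
    fun _ => rfl⟩

lemma altPos_lt {n j : ℕ} (h : j < n) : altPos n j < n := by
  unfold altPos
  split <;> omega

lemma altPos_injOn (n : ℕ) : Set.InjOn (altPos n) (Set.Iio n) := by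
  intro i hi j hj h
  simp only [Set.mem_Iio, altPos] at hi hj h
  split at h <;> split at h <;> omega

lemma not_pathRel_self (n i : ℕ) : ¬pathRel n i i := by
  rintro ⟨m, hm, h, h'⟩
  exact m.succ_ne_self (altPos_injOn n (by simp; omega) (by simp; omega) (h'.symm.trans h))

lemma blowup_adj_of_pathRel {k n : ℕ} {a b : Fin (k * n)} (h : pathRel n (a / k) (b / k)) :
    (blowup k n).Adj a b := by
  refine (SimpleGraph.fromRel_adj _ a b).2 ⟨?_, .inl h⟩
  rintro rfl
  exact not_pathRel_self n _ h

theorem stmt15 (n : ℕ) (V : Type) [Fintype V] [DecidableEq V]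
    (G : SimpleGraph V) [DecidableRel G.Adj]
    (hcard : Fintype.card V = n) (hreg : ∀ v, G.degree v = 2)
    (hbip : G.Colorable 2) :
    ∃ f : V → Fin (2 * n), Function.Injective f ∧
      ∀ u v, G.Adj u v → (blowup 2 n).Adj (f u) (f v) := by
  obtain ⟨c⟩ := hbip
  obtain ⟨g, hg_lt, hg_fiber, hg_adj⟩ := G.exists_isPathLayering (fun v => (hreg v).le)
    (G.recolorOfEquiv finTwoEquiv c) univ (by simp)
  simp only [card_univ, hcard, mem_univ, true_implies] at hg_lt hg_adj
  obtain ⟨F, hF⟩ := Function.exists_embedding_prod_fin_of_card_fiber_le g hg_fiber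
  let pos (v : V) : Fin (2 * n) :=
    ⟨2 * altPos n (g v) + (F v).2, by have := altPos_lt (hg_lt v); omega⟩
  have pos_div (v : V) : (pos v : ℕ) / 2 = altPos n (g v) := by simp only [pos]; omega
  have pos_mod (v : V) : (pos v : ℕ) % 2 = (F v).2 := by simp only [pos]; omega
  have pos_adj {u v : V} (h : g u + 1 = g v) : (blowup 2 n).Adj (pos u) (pos v) :=
    blowup_adj_of_pathRel <| by
      rw [pos_div, pos_div, ← h]
      exact ⟨g u, h ▸ hg_lt v, rfl, rfl⟩
  refine ⟨pos, fun u v huv => F.injective (Prod.ext ?_ ?_), fun u v huv => ?_⟩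
  · rw [hF, hF]
    exact altPos_injOn n (hg_lt u) (hg_lt v) (by rw [← pos_div, ← pos_div, huv])
  · exact Fin.ext (by rw [← pos_mod, ← pos_mod, huv])
  · rcases hg_adj u v huv with h | h
    exacts [pos_adj h, (pos_adj h).symm]
end

section
/- Let 𝒢 be an ordered graph on n vertices, let s, t, M be positive integers, and suppose that for every partition of the vertices of 𝒢 into t (possibly empty) order-obeying intervals each of size at most s, more than M pairs of intervals (including pairs of an interval with itself) are joined by at least one edge of 𝒢. If the number of such interval partitions of 𝒢 is at most P, and P · 2^{−M−1} < 1/2, then OR(𝒢) ≥ st. -/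
/-!
Colour the pairs of blocks `{0,…,s-1}, {s,…,2s-1}, …` of `Fin (s * t)` (loops included, i.e.
`Sym2 (Fin t)`) and give every edge the colour of the pair of blocks containing its ends.
A monochromatic increasing copy `f` of `G` yields the interval partition
`blockIndex s t ∘ f` of `G` with parts of size at most `s`, and forces the more than `M`
block pairs met by its edges to share one colour. Each of the at most `2P` pairs
(partition, colour) rules out at most `2 ^ (N - M - 1)` of the `2 ^ N` block colourings
(`N = card (Sym2 (Fin t))`),
so since `P < 2 ^ M` some block colouring survives.
-/

open Finset

theorem card_filter_forall_eq_le {α β : Type*} [Fintype α] [DecidableEq α] [Fintype β]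
    [DecidableEq β] (A : Finset α) (b : β) :
    #{χ : α → β | ∀ a ∈ A, χ a = b} ≤ Fintype.card β ^ (Fintype.card α - #A) := by
  calc #{χ : α → β | ∀ a ∈ A, χ a = b} ≤ #(univ : Finset (↥Aᶜ → β)) := by
        refine card_le_card_of_injOn (fun χ x => χ x.1) (fun _ _ => mem_univ _) ?_
        intro χ₁ h₁ χ₂ h₂ h
        simp only [mem_coe, mem_filter, mem_univ, true_and] at h₁ h₂
        funext x
        by_cases hx : x ∈ A
        · rw [h₁ x hx, h₂ x hx]
        · exact congrFun h ⟨x, mem_compl.2 hx⟩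
    _ = Fintype.card β ^ (Fintype.card α - #A) := by
        rw [card_univ, Fintype.card_fun, Fintype.card_coe, card_compl]

theorem exists_bool_coloring_forall_not_monochromatic {κ ι : Type*} [Fintype κ]
    [DecidableEq κ] [Fintype ι] (A : ι → Finset κ) (M : ℕ) (hA : ∀ i, M < #(A i))
    (hι : Fintype.card ι < 2 ^ M) :
    ∃ χ : κ → Bool, ∀ i col, ∃ a ∈ A i, χ a ≠ col := by
  set N := Fintype.card κ
  let bad : Finset (κ → Bool) :=
    univ.biUnion fun ic : ι × Bool => {χ | ∀ a ∈ A ic.1, χ a = ic.2}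
  have hbad : #bad < #(univ : Finset (κ → Bool)) := by
    rw [card_univ, Fintype.card_fun, Fintype.card_bool]
    rcases isEmpty_or_nonempty ι with _ | ⟨⟨i⟩⟩
    · simp [bad]
    have hMN : M + 1 ≤ N := (hA i).trans_le (card_le_univ _)
    calc #bad ≤ ∑ ic : ι × Bool, #{χ : κ → Bool | ∀ a ∈ A ic.1, χ a = ic.2} :=
          card_biUnion_le
      _ ≤ ∑ _ic : ι × Bool, 2 ^ (N - (M + 1)) := by
          refine sum_le_sum fun ic _ => (card_filter_forall_eq_le _ _).trans ?_
          rw [Fintype.card_bool]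
          exact Nat.pow_le_pow_right two_pos (Nat.sub_le_sub_left (hA ic.1) N)
      _ = Fintype.card ι * 2 * 2 ^ (N - (M + 1)) := by
          rw [sum_const, card_univ, Fintype.card_prod, Fintype.card_bool, smul_eq_mul]
      _ < 2 ^ M * 2 * 2 ^ (N - (M + 1)) := by gcongr
      _ = 2 ^ N := by rw [← pow_succ, ← pow_add, Nat.add_sub_cancel' hMN]
  obtain ⟨χ, -, hχ⟩ := exists_mem_notMem_of_card_lt_card hbad
  refine ⟨χ, fun i col => ?_⟩
  by_contra! h
  exact hχ (mem_biUnion.2 ⟨(i, col), mem_univ _, mem_filter.2 ⟨mem_univ _, h⟩⟩)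

def blockIndex (s t : ℕ) (x : Fin (s * t)) : Fin t :=
  (finProdFinEquiv.symm (x.cast (Nat.mul_comm s t))).1

theorem blockIndex_monotone (s t : ℕ) : Monotone (blockIndex s t) := fun _ _ hxy =>
  show _ / s ≤ _ / s from Nat.div_le_div_right hxy

theorem card_filter_blockIndex_le (s t : ℕ) (i : Fin t) :
    #{x | blockIndex s t x = i} ≤ s := by
  calc #{x | blockIndex s t x = i} ≤ #(univ : Finset (Fin s)) := by
        refine card_le_card_of_injOn
          (fun x => (finProdFinEquiv.symm (x.cast (Nat.mul_comm s t))).2) (fun _ _ => mem_univ _) ?_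
        intro x hx y hy h
        rw [mem_coe, mem_filter] at hx hy
        exact Fin.cast_injective _
          (finProdFinEquiv.symm.injective (Prod.ext (hx.2.trans hy.2.symm) h))
    _ = s := card_fin s

theorem card_filter_comp_le_of_injective {α β γ : Type*} [Fintype α] [Fintype β]
    [DecidableEq γ]
    {f : α → β} (hf : f.Injective) (h : β → γ) (c : γ) :
    #{a | h (f a) = c} ≤ #{b | h b = c} :=
  card_le_card_of_injOn f (fun a ha => by simpa using ha) hf.injOn

theorem card_filter_pairs_le_card_image_edgeFinset {V ι : Type*} [Fintype V] [LinearOrder ι]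
    [Fintype ι] (G : SimpleGraph V) [DecidableRel G.Adj] (g : V → ι)
    [DecidablePred fun p : ι × ι => p.1 ≤ p.2 ∧ ∃ u v, g u = p.1 ∧ g v = p.2 ∧ G.Adj u v] :
    #{p : ι × ι | p.1 ≤ p.2 ∧ ∃ u v, g u = p.1 ∧ g v = p.2 ∧ G.Adj u v}
      ≤ #(G.edgeFinset.image (Sym2.map g)) := by
  refine card_le_card_of_injOn (fun p => s(p.1, p.2)) ?_ ?_
  · rintro ⟨a, b⟩ hp
    simp only [mem_coe, mem_filter, mem_univ, true_and] at hp
    obtain ⟨-, u, v, rfl, rfl, huv⟩ := hp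
    exact mem_image.2 ⟨s(u, v), by simpa using huv, rfl⟩
  · intro p hp q hq h
    simp only [mem_coe, mem_filter, mem_univ, true_and] at hp hq
    exact congrArg Subtype.val
      (Sym2.sortEquiv.symm.injective (a₁ := ⟨p, hp.1⟩) (a₂ := ⟨q, hq.1⟩) h)

theorem lt_two_pow_of_mul_two_rpow_lt {P M : ℕ} (h : (P : ℝ) * 2 ^ (-(M : ℝ) - 1) < 1 / 2) :
    P < 2 ^ M := by
  rw [Real.rpow_sub two_pos, Real.rpow_neg zero_le_two, Real.rpow_natCast, Real.rpow_one] at h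
  have : (P : ℝ) < 2 ^ M := by
    field_simp at h
    linarith
  exact_mod_cast this

open Classical in
theorem stmt17_general (n s t M P : ℕ)
    (G : SimpleGraph (Fin n))
    (hpart : ∀ g : Fin n → Fin t, Monotone g →
      (∀ i, (Finset.univ.filter (fun v => g v = i)).card ≤ s) →
      M < (Finset.univ.filter (fun p : Fin t × Fin t =>
        p.1 ≤ p.2 ∧ ∃ u v, g u = p.1 ∧ g v = p.2 ∧ G.Adj u v)).card)
    (hP : Nat.card {g : Fin n → Fin t // Monotone g ∧
        ∀ i, (Finset.univ.filter (fun v => g v = i)).card ≤ s} ≤ P)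
    (hPM : (P : ℝ) * (2 : ℝ) ^ (-(M : ℝ) - 1) < 1 / 2) :
    ∃ c : Sym2 (Fin (s * t)) → Bool,
      ¬ ∃ (f : Fin n → Fin (s * t)) (col : Bool),
        StrictMono f ∧ ∀ u v, G.Adj u v → c s(f u, f v) = col := by
  let S := {g : Fin n → Fin t // Monotone g ∧ ∀ i, #{v | g v = i} ≤ s}
  have : Fintype S := Fintype.ofFinite S
  have hforced (g : S) : M < #(G.edgeFinset.image (Sym2.map g.1)) :=
    (hpart g.1 g.2.1 g.2.2).trans_le (card_filter_pairs_le_card_image_edgeFinset G g.1)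
  obtain ⟨χ, hχ⟩ := exists_bool_coloring_forall_not_monochromatic _ M hforced
    ((Nat.card_eq_fintype_card (α := S) ▸ hP).trans_lt (lt_two_pow_of_mul_two_rpow_lt hPM))
  refine ⟨fun e => χ (Sym2.map (blockIndex s t) e), ?_⟩
  rintro ⟨f, col, hf, hmono⟩
  let g : S := ⟨blockIndex s t ∘ f, (blockIndex_monotone s t).comp hf.monotone, fun i =>
    (card_filter_comp_le_of_injective hf.injective _ i).trans (card_filter_blockIndex_le s t i)⟩
  obtain ⟨_, ha, hne⟩ := hχ g col
  obtain ⟨⟨u, v⟩, huv, rfl⟩ := mem_image.1 ha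
  exact hne (hmono u v (by simpa using huv))

open Classical in
theorem stmt17 (n s t M P : ℕ) (hn : 0 < n) (hs : 0 < s) (ht : 0 < t) (hM : 0 < M)
    (G : SimpleGraph (Fin n))
    (hpart : ∀ g : Fin n → Fin t, Monotone g →
      (∀ i, (Finset.univ.filter (fun v => g v = i)).card ≤ s) →
      M < (Finset.univ.filter (fun p : Fin t × Fin t =>
        p.1 ≤ p.2 ∧ ∃ u v, g u = p.1 ∧ g v = p.2 ∧ G.Adj u v)).card)
    (hP : Nat.card {g : Fin n → Fin t // Monotone g ∧
        ∀ i, (Finset.univ.filter (fun v => g v = i)).card ≤ s} ≤ P)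
    (hPM : (P : ℝ) * (2 : ℝ) ^ (-(M : ℝ) - 1) < 1 / 2) :
    ∃ c : Sym2 (Fin (s * t)) → Bool,
      ¬ ∃ (f : Fin n → Fin (s * t)) (col : Bool),
        StrictMono f ∧ ∀ u v, G.Adj u v → c s(f u, f v) = col :=
  stmt17_general n s t M P G hpart hP hPM
end
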